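/- arXiv:2102.00469 — 4 statements merged into one kernel-verified Lean document; each statement's English description precedes it below -/
import Mathlib

section
/- Let A, B, D > 0 and let L : ℝ² × ℝ → ℝ (variables (t,x,y)) be C^∞ with L(t,x,y) > 0 and ∂²L/∂y²(t,x,y) > 0 for all (t,x,y), and L(t,x,y) = √(A + B·y²) whenever |y| > D. Define F : ℝ² × (ℝ² ∖ {0}) → ℝ by F(t,x,(v₁,v₂)) = v₁ · L(t,x, v₂/v₁) if v₁ > 0 and F(t,x,(v₁,v₂)) = √(A·v₁² + B·v₂²) if v₁ ≤ 0. Then F is C^∞ on ℝ² × (ℝ² ∖ {0}), F is positive everywhere, F is positively 1-homogeneous in velocity, and for every (t,x) and every v ≠ 0 the Hessian matrix (∂²/∂v_i∂v_j)(½ F(t,x,v)²) is positive definite. -/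
/-- The candidate Finsler metric built from the Lagrangian `L` and the flat
metric `√(A v₁² + B v₂²)`. -/
noncomputable def finslerOf (A B : ℝ) (L : ℝ × ℝ × ℝ → ℝ)
    (p : (ℝ × ℝ) × ℝ × ℝ) : ℝ :=
  if 0 < p.2.1 then p.2.1 * L (p.1.1, p.1.2, p.2.2 / p.2.1)
  else Real.sqrt (A * p.2.1 ^ 2 + B * p.2.2 ^ 2)

/-- The standard basis vectors of `ℝ²`. -/
def stdBasis2 : Fin 2 → ℝ × ℝ := ![(1, 0), (0, 1)]

lemma quad_pos {A B : ℝ} (hA : 0 < A) (hB : 0 < B) (u : ℝ × ℝ) (hu : u ≠ 0) :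
    0 < A * u.1 ^ 2 + B * u.2 ^ 2 := by
  have h : u.1 ≠ 0 ∨ u.2 ≠ 0 := by
    by_contra h
    push_neg at h
    exact hu (Prod.ext_iff.mpr ⟨h.1, h.2⟩)
  rcases h with h | h
  · have h1 : 0 < u.1 ^ 2 := by rw [← sq_abs]; exact pow_pos (abs_pos.mpr h) 2
    nlinarith [mul_nonneg hB.le (sq_nonneg u.2)]
  · have h1 : 0 < u.2 ^ 2 := by rw [← sq_abs]; exact pow_pos (abs_pos.mpr h) 2
    nlinarith [mul_nonneg hA.le (sq_nonneg u.1)]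

lemma mem_flat_region {D : ℝ} (hD : 0 < D) (u : ℝ × ℝ) (hu : u ≠ 0) (h1 : ¬ 0 < u.1) :
    D * u.1 < |u.2| := by
  rcases eq_or_ne u.2 0 with h2 | h2
  · have h1' : u.1 ≠ 0 := by
      intro h
      exact hu (Prod.ext_iff.mpr ⟨h, h2⟩)
    have hneg : u.1 < 0 := lt_of_le_of_ne (not_lt.mp h1) h1'
    rw [h2, abs_zero]
    exact mul_neg_of_pos_of_neg hD hneg
  · have h3 : 0 < |u.2| := abs_pos.mpr h2
    nlinarith [not_lt.mp h1]

lemma finslerOf_eq_flat (A B D : ℝ) (L : ℝ × ℝ × ℝ → ℝ)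
    (hLflat : ∀ t x y : ℝ, D < |y| → L (t, x, y) = Real.sqrt (A + B * y ^ 2))
    (p : (ℝ × ℝ) × ℝ × ℝ) (hp : D * p.2.1 < |p.2.2|) :
    finslerOf A B L p = Real.sqrt (A * p.2.1 ^ 2 + B * p.2.2 ^ 2) := by
  by_cases h1 : 0 < p.2.1
  · rw [finslerOf, if_pos h1]
    have hy : D < |p.2.2 / p.2.1| := by
      rw [abs_div, abs_of_pos h1]
      rw [lt_div_iff₀ h1]
      exact hp
    rw [hLflat _ _ _ hy]
    have key : p.2.1 * Real.sqrt (A + B * (p.2.2 / p.2.1) ^ 2)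
        = Real.sqrt (p.2.1 ^ 2 * (A + B * (p.2.2 / p.2.1) ^ 2)) := by
      rw [Real.sqrt_mul (sq_nonneg _), Real.sqrt_sq h1.le]
    rw [key]
    congr 1
    field_simp
  · rw [finslerOf, if_neg h1]

lemma posDef_fin_two {a b c : ℝ} (hc : 0 < c) (hdet : 0 < a * c - b ^ 2) :
    (!![a, b; b, c]).PosDef := by
  rw [Matrix.posDef_iff_dotProduct_mulVec]
  constructor
  · ext i j
    fin_cases i <;> fin_cases j <;>
      simp [Matrix.conjTranspose, Matrix.vecHead, Matrix.vecTail]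
  · intro x hx
    have h01 : x 0 ≠ 0 ∨ x 1 ≠ 0 := by
      by_contra h
      push_neg at h
      exact hx (funext fun i => by fin_cases i <;> simp [h.1, h.2])
    have hq : dotProduct (star x) ((!![a, b; b, c]).mulVec x)
        = a * x 0 ^ 2 + 2 * b * (x 0 * x 1) + c * x 1 ^ 2 := by
      simp [dotProduct, Matrix.mulVec, Fin.sum_univ_two]
      ring
    rw [hq]
    rcases eq_or_ne (x 0) 0 with h0 | h0
    · have h1 : x 1 ≠ 0 := by tauto
      have : 0 < x 1 ^ 2 := by positivity
      rw [h0]; nlinarith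
    · have : 0 < x 0 ^ 2 := by positivity
      nlinarith [sq_nonneg (c * x 1 + b * x 0)]

section aux
variable {ℓ : ℝ → ℝ}

lemma curved_fderiv (hℓ : ContDiff ℝ (⊤ : ℕ∞) ℓ) {w : ℝ × ℝ} (hw : w.1 ≠ 0) (e : ℝ × ℝ) :
    fderiv ℝ (fun u : ℝ × ℝ => (1/2) * (u.1 * ℓ (u.2/u.1))^2) w e
      = (w.1 * (ℓ (w.2/w.1) * ℓ (w.2/w.1))
          - w.2 * (ℓ (w.2/w.1) * deriv ℓ (w.2/w.1))) * e.1
        + (w.1 * (ℓ (w.2/w.1) * deriv ℓ (w.2/w.1))) * e.2 := by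
  simp only [div_eq_mul_inv, one_mul, pow_two]
  have hfst : HasFDerivAt (fun u : ℝ × ℝ => u.1) (ContinuousLinearMap.fst ℝ ℝ ℝ) w :=
    hasFDerivAt_fst
  have hsnd : HasFDerivAt (fun u : ℝ × ℝ => u.2) (ContinuousLinearMap.snd ℝ ℝ ℝ) w :=
    hasFDerivAt_snd
  have hinv : HasFDerivAt (fun u : ℝ × ℝ => (u.1)⁻¹) _ w :=
    (hasDerivAt_inv hw).comp_hasFDerivAt w hfst
  have hdiv : HasFDerivAt (fun u : ℝ × ℝ => u.2 * (u.1)⁻¹) _ w := hsnd.mul hinv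
  have hcomp : HasFDerivAt (fun u : ℝ × ℝ => ℓ (u.2 * (u.1)⁻¹)) _ w :=
    (hℓ.differentiable (by simp) (w.2 * w.1⁻¹)).hasDerivAt.comp_hasFDerivAt w hdiv
  have hprod : HasFDerivAt (fun u : ℝ × ℝ => u.1 * ℓ (u.2 * (u.1)⁻¹)) _ w := hfst.mul hcomp
  have H : HasFDerivAt
      (fun u : ℝ × ℝ => 2⁻¹ * ((u.1 * ℓ (u.2 * (u.1)⁻¹)) * (u.1 * ℓ (u.2 * (u.1)⁻¹)))) _ w :=
    (hprod.mul hprod).const_mul (2⁻¹ : ℝ)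
  rw [H.fderiv]
  simp
  field_simp
  ring

lemma curved_phi0 (hℓ : ContDiff ℝ (⊤ : ℕ∞) ℓ) {v : ℝ × ℝ} (hv : v.1 ≠ 0) (e : ℝ × ℝ) :
    fderiv ℝ (fun w : ℝ × ℝ => w.1 * (ℓ (w.2/w.1) * ℓ (w.2/w.1))
        - w.2 * (ℓ (w.2/w.1) * deriv ℓ (w.2/w.1))) v e
      = (ℓ (v.2/v.1) * ℓ (v.2/v.1)
          - 2 * (v.2/v.1) * (ℓ (v.2/v.1) * deriv ℓ (v.2/v.1))
          + (v.2/v.1)^2 * (deriv ℓ (v.2/v.1) * deriv ℓ (v.2/v.1)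
              + ℓ (v.2/v.1) * deriv (deriv ℓ) (v.2/v.1))) * e.1
        + (ℓ (v.2/v.1) * deriv ℓ (v.2/v.1)
            - (v.2/v.1) * (deriv ℓ (v.2/v.1) * deriv ℓ (v.2/v.1)
              + ℓ (v.2/v.1) * deriv (deriv ℓ) (v.2/v.1))) * e.2 := by
  have hdℓ : Differentiable ℝ (deriv ℓ) := ((contDiff_infty_iff_deriv.mp (hℓ.of_le (by simp))).2).differentiable (by simp)
  simp only [div_eq_mul_inv]
  have hfst : HasFDerivAt (fun u : ℝ × ℝ => u.1) (ContinuousLinearMap.fst ℝ ℝ ℝ) v :=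
    hasFDerivAt_fst
  have hsnd : HasFDerivAt (fun u : ℝ × ℝ => u.2) (ContinuousLinearMap.snd ℝ ℝ ℝ) v :=
    hasFDerivAt_snd
  have hinv : HasFDerivAt (fun u : ℝ × ℝ => (u.1)⁻¹) _ v :=
    (hasDerivAt_inv hv).comp_hasFDerivAt v hfst
  have hdiv : HasFDerivAt (fun u : ℝ × ℝ => u.2 * (u.1)⁻¹) _ v := hsnd.mul hinv
  have hc : HasFDerivAt (fun u : ℝ × ℝ => ℓ (u.2 * (u.1)⁻¹)) _ v :=
    (hℓ.differentiable (by simp) (v.2 * v.1⁻¹)).hasDerivAt.comp_hasFDerivAt v hdiv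
  have hc1 : HasFDerivAt (fun u : ℝ × ℝ => deriv ℓ (u.2 * (u.1)⁻¹)) _ v :=
    HasDerivAt.comp_hasFDerivAt (h₂ := deriv ℓ) (h₂' := deriv (deriv ℓ) (v.2 * v.1⁻¹)) v
      (hdℓ (v.2 * v.1⁻¹)).hasDerivAt hdiv
  have H : HasFDerivAt (fun w : ℝ × ℝ => w.1 * (ℓ (w.2 * (w.1)⁻¹) * ℓ (w.2 * (w.1)⁻¹))
      - w.2 * (ℓ (w.2 * (w.1)⁻¹) * deriv ℓ (w.2 * (w.1)⁻¹))) _ v :=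
    (hfst.mul (hc.mul hc)).sub (hsnd.mul (hc.mul hc1))
  rw [H.fderiv]
  simp
  field_simp
  ring

lemma curved_phi1 (hℓ : ContDiff ℝ (⊤ : ℕ∞) ℓ) {v : ℝ × ℝ} (hv : v.1 ≠ 0) (e : ℝ × ℝ) :
    fderiv ℝ (fun w : ℝ × ℝ => w.1 * (ℓ (w.2/w.1) * deriv ℓ (w.2/w.1))) v e
      = (ℓ (v.2/v.1) * deriv ℓ (v.2/v.1)
            - (v.2/v.1) * (deriv ℓ (v.2/v.1) * deriv ℓ (v.2/v.1)
              + ℓ (v.2/v.1) * deriv (deriv ℓ) (v.2/v.1))) * e.1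
        + (deriv ℓ (v.2/v.1) * deriv ℓ (v.2/v.1)
              + ℓ (v.2/v.1) * deriv (deriv ℓ) (v.2/v.1)) * e.2 := by
  have hdℓ : Differentiable ℝ (deriv ℓ) := ((contDiff_infty_iff_deriv.mp (hℓ.of_le (by simp))).2).differentiable (by simp)
  simp only [div_eq_mul_inv]
  have hfst : HasFDerivAt (fun u : ℝ × ℝ => u.1) (ContinuousLinearMap.fst ℝ ℝ ℝ) v :=
    hasFDerivAt_fst
  have hsnd : HasFDerivAt (fun u : ℝ × ℝ => u.2) (ContinuousLinearMap.snd ℝ ℝ ℝ) v :=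
    hasFDerivAt_snd
  have hinv : HasFDerivAt (fun u : ℝ × ℝ => (u.1)⁻¹) _ v :=
    (hasDerivAt_inv hv).comp_hasFDerivAt v hfst
  have hdiv : HasFDerivAt (fun u : ℝ × ℝ => u.2 * (u.1)⁻¹) _ v := hsnd.mul hinv
  have hc : HasFDerivAt (fun u : ℝ × ℝ => ℓ (u.2 * (u.1)⁻¹)) _ v :=
    (hℓ.differentiable (by simp) (v.2 * v.1⁻¹)).hasDerivAt.comp_hasFDerivAt v hdiv
  have hc1 : HasFDerivAt (fun u : ℝ × ℝ => deriv ℓ (u.2 * (u.1)⁻¹)) _ v :=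
    HasDerivAt.comp_hasFDerivAt (h₂ := deriv ℓ) (h₂' := deriv (deriv ℓ) (v.2 * v.1⁻¹)) v
      (hdℓ (v.2 * v.1⁻¹)).hasDerivAt hdiv
  have H : HasFDerivAt
      (fun w : ℝ × ℝ => w.1 * (ℓ (w.2 * (w.1)⁻¹) * deriv ℓ (w.2 * (w.1)⁻¹))) _ v :=
    hfst.mul (hc.mul hc1)
  rw [H.fderiv]
  simp
  field_simp
  ring

lemma flat_fderiv (A B : ℝ) (w e : ℝ × ℝ) :
    fderiv ℝ (fun u : ℝ × ℝ => (1/2) * (A * u.1^2 + B * u.2^2)) w e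
      = A * w.1 * e.1 + B * w.2 * e.2 := by
  simp only [div_eq_mul_inv, one_mul, pow_two]
  have hfst : HasFDerivAt (fun u : ℝ × ℝ => u.1) (ContinuousLinearMap.fst ℝ ℝ ℝ) w :=
    hasFDerivAt_fst
  have hsnd : HasFDerivAt (fun u : ℝ × ℝ => u.2) (ContinuousLinearMap.snd ℝ ℝ ℝ) w :=
    hasFDerivAt_snd
  have H : HasFDerivAt
      (fun u : ℝ × ℝ => 2⁻¹ * (A * (u.1 * u.1) + B * (u.2 * u.2))) _ w :=
    (((hfst.mul hfst).const_mul A).add ((hsnd.mul hsnd).const_mul B)).const_mul (2⁻¹ : ℝ)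
  rw [H.fderiv]
  simp
  ring

lemma flat_fderiv2 (A B a b : ℝ) (v e : ℝ × ℝ) :
    fderiv ℝ (fun w : ℝ × ℝ => A * w.1 * a + B * w.2 * b) v e
      = A * e.1 * a + B * e.2 * b := by
  have hfst : HasFDerivAt (fun u : ℝ × ℝ => u.1) (ContinuousLinearMap.fst ℝ ℝ ℝ) v :=
    hasFDerivAt_fst
  have hsnd : HasFDerivAt (fun u : ℝ × ℝ => u.2) (ContinuousLinearMap.snd ℝ ℝ ℝ) v :=
    hasFDerivAt_snd
  have H : HasFDerivAt (fun w : ℝ × ℝ => A * w.1 * a + B * w.2 * b) _ v :=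
    (((hfst.const_mul A).mul_const a)).add ((hsnd.const_mul B).mul_const b)
  rw [H.fderiv]
  simp
  ring
end aux
theorem finsler_metric_of_lagrangian
    (A B D : ℝ) (hA : 0 < A) (hB : 0 < B) (hD : 0 < D)
    (L : ℝ × ℝ × ℝ → ℝ) (hL : ContDiff ℝ (⊤ : ℕ∞) L)
    (hLpos : ∀ t x y : ℝ, 0 < L (t, x, y))
    (hLconv : ∀ t x y : ℝ, 0 < iteratedDeriv 2 (fun y' => L (t, x, y')) y)
    (hLflat : ∀ t x y : ℝ, D < |y| → L (t, x, y) = Real.sqrt (A + B * y ^ 2)) :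
    ContDiffOn ℝ (⊤ : ℕ∞) (finslerOf A B L) {p : (ℝ × ℝ) × ℝ × ℝ | p.2 ≠ 0} ∧
    (∀ p : (ℝ × ℝ) × ℝ × ℝ, p.2 ≠ 0 → 0 < finslerOf A B L p) ∧
    (∀ (x v : ℝ × ℝ), v ≠ 0 → ∀ lam : ℝ, 0 < lam →
      finslerOf A B L (x, lam • v) = lam * finslerOf A B L (x, v)) ∧
    (∀ (x v : ℝ × ℝ), v ≠ 0 →
      (Matrix.of fun i j : Fin 2 =>
        fderiv ℝ (fun w : ℝ × ℝ =>
          fderiv ℝ (fun u : ℝ × ℝ => (1 / 2) * (finslerOf A B L (x, u)) ^ 2) w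
            (stdBasis2 j)) v (stdBasis2 i)).PosDef) := by
  refine ⟨?_, ?_, ?_, ?_⟩
  · -- smoothness
    intro p hp
    apply ContDiffAt.contDiffWithinAt
    by_cases h1 : 0 < p.2.1
    · have hU : IsOpen {q : (ℝ × ℝ) × ℝ × ℝ | 0 < q.2.1} :=
        isOpen_lt continuous_const continuous_snd.fst
      have hinner : ContDiffAt ℝ (⊤ : ℕ∞)
          (fun q : (ℝ × ℝ) × ℝ × ℝ => (q.1.1, q.1.2, q.2.2 / q.2.1)) p := by
        refine ContDiffAt.prodMk ?_ (ContDiffAt.prodMk ?_ ?_)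
        · exact contDiff_fst.fst.contDiffAt
        · exact contDiff_fst.snd.contDiffAt
        · exact ContDiffAt.div contDiff_snd.snd.contDiffAt contDiff_snd.fst.contDiffAt
            (ne_of_gt h1)
      have hG : ContDiffAt ℝ (⊤ : ℕ∞)
          (fun q : (ℝ × ℝ) × ℝ × ℝ => q.2.1 * L (q.1.1, q.1.2, q.2.2 / q.2.1)) p :=
        contDiff_snd.fst.contDiffAt.mul (hL.contDiffAt.comp p hinner)
      refine hG.congr_of_eventuallyEq ?_
      refine Filter.eventuallyEq_of_mem (hU.mem_nhds h1) (fun q hq => ?_)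
      rw [finslerOf]
      exact if_pos hq
    · have hW : IsOpen {q : (ℝ × ℝ) × ℝ × ℝ | D * q.2.1 < |q.2.2|} :=
        isOpen_lt (continuous_const.mul continuous_snd.fst) continuous_snd.snd.abs
      have hpW : D * p.2.1 < |p.2.2| := mem_flat_region hD p.2 hp h1
      have hs : 0 < A * p.2.1 ^ 2 + B * p.2.2 ^ 2 := quad_pos hA hB p.2 hp
      have hG : ContDiffAt ℝ (⊤ : ℕ∞)
          (fun q : (ℝ × ℝ) × ℝ × ℝ => Real.sqrt (A * q.2.1 ^ 2 + B * q.2.2 ^ 2)) p := by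
        refine (Real.contDiffAt_sqrt (ne_of_gt hs)).comp p ?_
        exact ((contDiff_const.mul (contDiff_snd.fst.pow 2)).add
          (contDiff_const.mul (contDiff_snd.snd.pow 2))).contDiffAt
      refine hG.congr_of_eventuallyEq ?_
      refine Filter.eventuallyEq_of_mem (hW.mem_nhds hpW) (fun q hq => ?_)
      exact finslerOf_eq_flat A B D L hLflat q hq
  · -- positivity
    intro p hp
    by_cases h1 : 0 < p.2.1
    · rw [finslerOf, if_pos h1]
      exact mul_pos h1 (hLpos _ _ _)
    · rw [finslerOf, if_neg h1]
      exact Real.sqrt_pos.mpr (quad_pos hA hB p.2 hp)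
  · -- homogeneity
    intro x v hv lam hlam
    obtain ⟨v1, v2⟩ := v
    rw [Prod.smul_mk, smul_eq_mul, smul_eq_mul]
    by_cases h1 : 0 < v1
    · have h1' : 0 < lam * v1 := mul_pos hlam h1
      rw [finslerOf, finslerOf]
      simp only
      rw [if_pos h1', if_pos h1, mul_div_mul_left v2 v1 (ne_of_gt hlam)]
      ring
    · have h1' : ¬ 0 < lam * v1 := by
        have hv1 : v1 ≤ 0 := not_lt.mp h1
        have : lam * v1 ≤ 0 := by nlinarith
        exact not_lt.mpr this
      simp only [finslerOf]
      rw [if_neg h1', if_neg h1]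
      rw [show A * (lam * v1) ^ 2 + B * (lam * v2) ^ 2
          = lam ^ 2 * (A * v1 ^ 2 + B * v2 ^ 2) by ring,
        Real.sqrt_mul (sq_nonneg lam), Real.sqrt_sq hlam.le]
  · -- Hessian positive definiteness
    intro x v hv
    have hℓ : ContDiff ℝ (⊤ : ℕ∞) (fun y : ℝ => L (x.1, x.2, y)) :=
      hL.comp (contDiff_const.prodMk (contDiff_const.prodMk contDiff_id))
    set ℓ : ℝ → ℝ := fun y : ℝ => L (x.1, x.2, y) with hℓdef
    have hcpos : ∀ y, 0 < ℓ y := fun y => hLpos x.1 x.2 y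
    have hc2pos : ∀ y, 0 < deriv (deriv ℓ) y := by
      intro y
      have h := hLconv x.1 x.2 y
      rwa [show (2 : ℕ) = 1 + 1 from rfl, iteratedDeriv_succ, iteratedDeriv_one] at h
    by_cases hv1 : 0 < v.1
    · -- curved region
      have hΩ : IsOpen {u : ℝ × ℝ | 0 < u.1} := isOpen_lt continuous_const continuous_fst
      have hfg : ∀ u ∈ {u : ℝ × ℝ | 0 < u.1},
          (1 / 2 : ℝ) * (finslerOf A B L (x, u)) ^ 2
            = (1 / 2) * (u.1 * ℓ (u.2 / u.1)) ^ 2 := by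
        intro u hu
        simp only [finslerOf]
        rw [if_pos (show (0:ℝ) < u.1 from hu)]
      have hder1 : ∀ w ∈ {u : ℝ × ℝ | 0 < u.1},
          fderiv ℝ (fun u : ℝ × ℝ => (1 / 2) * (finslerOf A B L (x, u)) ^ 2) w
            = fderiv ℝ (fun u : ℝ × ℝ => (1 / 2) * (u.1 * ℓ (u.2 / u.1)) ^ 2) w := by
        intro w hw
        exact Filter.EventuallyEq.fderiv_eq
          (Filter.eventuallyEq_of_mem (hΩ.mem_nhds hw) hfg)
      have hj0 : (fun w : ℝ × ℝ =>
            fderiv ℝ (fun u : ℝ × ℝ => (1 / 2) * (finslerOf A B L (x, u)) ^ 2) w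
              ((1 : ℝ), (0 : ℝ)))
          =ᶠ[nhds v] (fun w : ℝ × ℝ => w.1 * (ℓ (w.2 / w.1) * ℓ (w.2 / w.1))
            - w.2 * (ℓ (w.2 / w.1) * deriv ℓ (w.2 / w.1))) := by
        refine Filter.eventuallyEq_of_mem (hΩ.mem_nhds hv1) (fun w hw => ?_)
        rw [hder1 w hw, curved_fderiv hℓ (ne_of_gt hw)]
        simp
      have hj1 : (fun w : ℝ × ℝ =>
            fderiv ℝ (fun u : ℝ × ℝ => (1 / 2) * (finslerOf A B L (x, u)) ^ 2) w
              ((0 : ℝ), (1 : ℝ)))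
          =ᶠ[nhds v] (fun w : ℝ × ℝ =>
            w.1 * (ℓ (w.2 / w.1) * deriv ℓ (w.2 / w.1))) := by
        refine Filter.eventuallyEq_of_mem (hΩ.mem_nhds hv1) (fun w hw => ?_)
        rw [hder1 w hw, curved_fderiv hℓ (ne_of_gt hw)]
        simp
      set y : ℝ := v.2 / v.1 with hy
      set c : ℝ := ℓ y with hc
      set c1 : ℝ := deriv ℓ y with hc1
      set c2 : ℝ := deriv (deriv ℓ) y with hc2
      have E00 : fderiv ℝ (fun w : ℝ × ℝ =>
            fderiv ℝ (fun u : ℝ × ℝ => (1 / 2) * (finslerOf A B L (x, u)) ^ 2) w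
              ((1 : ℝ), (0 : ℝ))) v ((1 : ℝ), (0 : ℝ))
          = c * c - 2 * y * (c * c1) + y ^ 2 * (c1 * c1 + c * c2) := by
        rw [hj0.fderiv_eq, curved_phi0 hℓ (ne_of_gt hv1)]
        simp [hy, hc, hc1, hc2]
      have E10 : fderiv ℝ (fun w : ℝ × ℝ =>
            fderiv ℝ (fun u : ℝ × ℝ => (1 / 2) * (finslerOf A B L (x, u)) ^ 2) w
              ((1 : ℝ), (0 : ℝ))) v ((0 : ℝ), (1 : ℝ))
          = c * c1 - y * (c1 * c1 + c * c2) := by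
        rw [hj0.fderiv_eq, curved_phi0 hℓ (ne_of_gt hv1)]
        simp [hy, hc, hc1, hc2]
      have E01 : fderiv ℝ (fun w : ℝ × ℝ =>
            fderiv ℝ (fun u : ℝ × ℝ => (1 / 2) * (finslerOf A B L (x, u)) ^ 2) w
              ((0 : ℝ), (1 : ℝ))) v ((1 : ℝ), (0 : ℝ))
          = c * c1 - y * (c1 * c1 + c * c2) := by
        rw [hj1.fderiv_eq, curved_phi1 hℓ (ne_of_gt hv1)]
        simp [hy, hc, hc1, hc2]
      have E11 : fderiv ℝ (fun w : ℝ × ℝ =>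
            fderiv ℝ (fun u : ℝ × ℝ => (1 / 2) * (finslerOf A B L (x, u)) ^ 2) w
              ((0 : ℝ), (1 : ℝ))) v ((0 : ℝ), (1 : ℝ))
          = c1 * c1 + c * c2 := by
        rw [hj1.fderiv_eq, curved_phi1 hℓ (ne_of_gt hv1)]
        simp [hy, hc, hc1, hc2]
      have hM : (Matrix.of fun i j : Fin 2 =>
          fderiv ℝ (fun w : ℝ × ℝ =>
            fderiv ℝ (fun u : ℝ × ℝ => (1 / 2) * (finslerOf A B L (x, u)) ^ 2) w
              (stdBasis2 j)) v (stdBasis2 i))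
          = !![c * c - 2 * y * (c * c1) + y ^ 2 * (c1 * c1 + c * c2),
               c * c1 - y * (c1 * c1 + c * c2);
               c * c1 - y * (c1 * c1 + c * c2), c1 * c1 + c * c2] := by
        ext i j
        fin_cases i <;> fin_cases j
        · simpa [stdBasis2] using E00
        · simpa [stdBasis2] using E01
        · simpa [stdBasis2] using E10
        · simpa [stdBasis2] using E11
      rw [hM]
      apply posDef_fin_two
      · nlinarith [hcpos y, hc2pos y, sq_nonneg c1, mul_pos (hcpos y) (hc2pos y)]
      · have hdet : (c * c - 2 * y * (c * c1) + y ^ 2 * (c1 * c1 + c * c2))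
            * (c1 * c1 + c * c2) - (c * c1 - y * (c1 * c1 + c * c2)) ^ 2
            = c ^ 3 * c2 := by ring
        rw [hdet]
        exact mul_pos (pow_pos (hcpos y) 3) (hc2pos y)
    · -- flat region
      have hΩ : IsOpen {u : ℝ × ℝ | D * u.1 < |u.2|} :=
        isOpen_lt (continuous_const.mul continuous_fst) continuous_snd.abs
      have hvΩ : D * v.1 < |v.2| := mem_flat_region hD v hv hv1
      have hfg : ∀ u ∈ {u : ℝ × ℝ | D * u.1 < |u.2|},
          (1 / 2 : ℝ) * (finslerOf A B L (x, u)) ^ 2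
            = (1 / 2) * (A * u.1 ^ 2 + B * u.2 ^ 2) := by
        intro u hu
        rw [finslerOf_eq_flat A B D L hLflat (x, u) hu,
          Real.sq_sqrt (by positivity)]
      have hder1 : ∀ w ∈ {u : ℝ × ℝ | D * u.1 < |u.2|},
          fderiv ℝ (fun u : ℝ × ℝ => (1 / 2) * (finslerOf A B L (x, u)) ^ 2) w
            = fderiv ℝ (fun u : ℝ × ℝ => (1 / 2) * (A * u.1 ^ 2 + B * u.2 ^ 2)) w := by
        intro w hw
        exact Filter.EventuallyEq.fderiv_eq
          (Filter.eventuallyEq_of_mem (hΩ.mem_nhds hw) hfg)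
      have hj0 : (fun w : ℝ × ℝ =>
            fderiv ℝ (fun u : ℝ × ℝ => (1 / 2) * (finslerOf A B L (x, u)) ^ 2) w
              ((1 : ℝ), (0 : ℝ)))
          =ᶠ[nhds v] (fun w : ℝ × ℝ => A * w.1 * 1 + B * w.2 * 0) := by
        refine Filter.eventuallyEq_of_mem (hΩ.mem_nhds hvΩ) (fun w hw => ?_)
        rw [hder1 w hw, flat_fderiv]
      have hj1 : (fun w : ℝ × ℝ =>
            fderiv ℝ (fun u : ℝ × ℝ => (1 / 2) * (finslerOf A B L (x, u)) ^ 2) w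
              ((0 : ℝ), (1 : ℝ)))
          =ᶠ[nhds v] (fun w : ℝ × ℝ => A * w.1 * 0 + B * w.2 * 1) := by
        refine Filter.eventuallyEq_of_mem (hΩ.mem_nhds hvΩ) (fun w hw => ?_)
        rw [hder1 w hw, flat_fderiv]
      have E00 : fderiv ℝ (fun w : ℝ × ℝ =>
            fderiv ℝ (fun u : ℝ × ℝ => (1 / 2) * (finslerOf A B L (x, u)) ^ 2) w
              ((1 : ℝ), (0 : ℝ))) v ((1 : ℝ), (0 : ℝ)) = A := by
        rw [hj0.fderiv_eq, flat_fderiv2]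
        norm_num
      have E10 : fderiv ℝ (fun w : ℝ × ℝ =>
            fderiv ℝ (fun u : ℝ × ℝ => (1 / 2) * (finslerOf A B L (x, u)) ^ 2) w
              ((1 : ℝ), (0 : ℝ))) v ((0 : ℝ), (1 : ℝ)) = 0 := by
        rw [hj0.fderiv_eq, flat_fderiv2]
        norm_num
      have E01 : fderiv ℝ (fun w : ℝ × ℝ =>
            fderiv ℝ (fun u : ℝ × ℝ => (1 / 2) * (finslerOf A B L (x, u)) ^ 2) w
              ((0 : ℝ), (1 : ℝ))) v ((1 : ℝ), (0 : ℝ)) = 0 := by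
        rw [hj1.fderiv_eq, flat_fderiv2]
        norm_num
      have E11 : fderiv ℝ (fun w : ℝ × ℝ =>
            fderiv ℝ (fun u : ℝ × ℝ => (1 / 2) * (finslerOf A B L (x, u)) ^ 2) w
              ((0 : ℝ), (1 : ℝ))) v ((0 : ℝ), (1 : ℝ)) = B := by
        rw [hj1.fderiv_eq, flat_fderiv2]
        norm_num
      have hM : (Matrix.of fun i j : Fin 2 =>
          fderiv ℝ (fun w : ℝ × ℝ =>
            fderiv ℝ (fun u : ℝ × ℝ => (1 / 2) * (finslerOf A B L (x, u)) ^ 2) w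
              (stdBasis2 j)) v (stdBasis2 i))
          = !![A, 0; 0, B] := by
        ext i j
        fin_cases i <;> fin_cases j
        · simpa [stdBasis2] using E00
        · simpa [stdBasis2] using E01
        · simpa [stdBasis2] using E10
        · simpa [stdBasis2] using E11
      rw [hM]
      apply posDef_fin_two hB
      nlinarith
end

section
/- Let l : ℝ → ℝ be C² and define f : {(u₁,u₂) ∈ ℝ² : u₁ > 0} → ℝ by f(u₁,u₂) = u₁ · l(u₂/u₁). Then for every u = (u₁,u₂) with u₁ > 0 and every v = (v₁,v₂) ∈ ℝ², the Hessian quadratic form of f satisfies ⟨v, Hess f(u) v⟩ = (v₁·(u₂/u₁) − v₂)² · l''(u₂/u₁)/u₁. In particular, if additionally l > 0 and l'' > 0 everywhere, then the Hessian of ½f² at u is positive definite: ⟨v, Hess(½f²)(u) v⟩ = (Df(u)v)² + f(u)·(v₁·(u₂/u₁) − v₂)²·l''(u₂/u₁)/u₁ > 0 for every v ≠ 0. -/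
/-!
Write `y = u₂ / u₁`. The gradient of `f = homogExt l` is `l y • e₁ - l' y • ξ`, where `ξ v = v₁ y - v₂`
is the linear form vanishing on the line through `u`, and `y` itself has derivative `-ξ / u₁`.
Differentiating once more, the two terms carrying `l'` cancel and the Hessian is the rank-one form
`(l'' y / u₁) ξ ⊗ ξ`. For `½ f²` the product rule adds `(Df(u) v)²`; this is positive unless `ξ v = 0`,
and then `v` is a nonzero multiple of `u`, so that `Df(u) v = l y v₁ ≠ 0`.
-/

/-- The positively 1-homogeneous extension of `l` to the half-plane `{u₁ > 0}`. -/
noncomputable def homogExt (l : ℝ → ℝ) (u : ℝ × ℝ) : ℝ := u.1 * l (u.2 / u.1)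

open ContinuousLinearMap Filter Topology

/-- The form `ξ` of the proof sketch above. -/
noncomputable def transverseForm (u : ℝ × ℝ) : ℝ × ℝ →L[ℝ] ℝ :=
  (u.2 / u.1) • fst ℝ ℝ ℝ - snd ℝ ℝ ℝ

@[simp]
theorem transverseForm_apply (u v : ℝ × ℝ) :
    transverseForm u v = v.1 * (u.2 / u.1) - v.2 := by
  simp only [transverseForm, sub_apply, smul_apply, coe_fst', coe_snd', smul_eq_mul, mul_comm]

theorem hasFDerivAt_snd_div_fst {w : ℝ × ℝ} (hw : w.1 ≠ 0) :
    HasFDerivAt (fun w : ℝ × ℝ => w.2 / w.1) (-w.1⁻¹ • transverseForm w) w := by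
  have hinv : HasFDerivAt (fun w : ℝ × ℝ => w.1⁻¹) (-(w.1 ^ 2)⁻¹ • fst ℝ ℝ ℝ) w :=
    (hasDerivAt_inv hw).comp_hasFDerivAt w hasFDerivAt_fst
  refine (hasFDerivAt_snd.fun_mul hinv).congr_fderiv ?_
  refine ContinuousLinearMap.ext fun v => ?_
  simp only [add_apply, smul_apply, smul_eq_mul, coe_fst', coe_snd', transverseForm_apply]
  field_simp
  ring

variable {l : ℝ → ℝ}

theorem hasFDerivAt_homogExt {w : ℝ × ℝ} (hw : w.1 ≠ 0) (hl : DifferentiableAt ℝ l (w.2 / w.1)) :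
    HasFDerivAt (homogExt l)
      (l (w.2 / w.1) • fst ℝ ℝ ℝ - deriv l (w.2 / w.1) • transverseForm w) w := by
  have hcomp := hl.hasDerivAt.comp_hasFDerivAt w (hasFDerivAt_snd_div_fst hw)
  refine (hasFDerivAt_fst.fun_mul hcomp).congr_fderiv ?_
  refine ContinuousLinearMap.ext fun v => ?_
  simp only [add_apply, sub_apply, smul_apply, smul_eq_mul, coe_fst', transverseForm_apply,
    Function.comp_apply]
  field_simp
  ring

theorem eventually_differentiableAt_homogExt (hl : Differentiable ℝ l) {u : ℝ × ℝ}
    (hu : u.1 ≠ 0) : ∀ᶠ w in 𝓝 u, DifferentiableAt ℝ (homogExt l) w := by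
  filter_upwards [continuous_fst.continuousAt.eventually_ne hu] with w hw
  exact (hasFDerivAt_homogExt hw (hl _)).differentiableAt

theorem hasFDerivAt_fderiv_homogExt_apply (hl : Differentiable ℝ l) {u : ℝ × ℝ} (hu : u.1 ≠ 0)
    (hl' : DifferentiableAt ℝ (deriv l) (u.2 / u.1)) (v : ℝ × ℝ) :
    HasFDerivAt (fun w => fderiv ℝ (homogExt l) w v)
      ((deriv (deriv l) (u.2 / u.1) * transverseForm u v / u.1) • transverseForm u) u := by
  have hev : (fun w => fderiv ℝ (homogExt l) w v) =ᶠ[𝓝 u]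
      fun w => l (w.2 / w.1) * v.1 - deriv l (w.2 / w.1) * (v.1 * (w.2 / w.1) - v.2) := by
    filter_upwards [continuous_fst.continuousAt.eventually_ne hu] with w hw
    simp only [(hasFDerivAt_homogExt hw (hl _)).fderiv, sub_apply, smul_apply, coe_fst', smul_eq_mul,
      transverseForm_apply]
  have hy : HasDerivAt (fun y => l y * v.1 - deriv l y * (v.1 * y - v.2))
      (-(deriv (deriv l) (u.2 / u.1) * (v.1 * (u.2 / u.1) - v.2))) (u.2 / u.1) := by
    refine (((hl _).hasDerivAt.mul_const v.1).sub
      (hl'.hasDerivAt.mul (((hasDerivAt_id' _).const_mul v.1).sub_const v.2))).congr_deriv ?_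
    ring
  refine ((hy.comp_hasFDerivAt u (hasFDerivAt_snd_div_fst hu)).congr_of_eventuallyEq
    hev).congr_fderiv ?_
  refine ContinuousLinearMap.ext fun v' => ?_
  simp only [smul_apply, smul_eq_mul, transverseForm_apply]
  field_simp

theorem fderiv_fderiv_half_sq_apply {E : Type*} [NormedAddCommGroup E] [NormedSpace ℝ E]
    {f : E → ℝ} {u : E} (hf : ∀ᶠ w in 𝓝 u, DifferentiableAt ℝ f w) {v : E}
    (hdf : DifferentiableAt ℝ (fun w => fderiv ℝ f w v) u) :
    fderiv ℝ (fun w => fderiv ℝ (fun z => 1 / 2 * f z ^ 2) w v) u v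
      = fderiv ℝ f u v ^ 2 + f u * fderiv ℝ (fun w => fderiv ℝ f w v) u v := by
  have hev : (fun w => fderiv ℝ (fun z => 1 / 2 * f z ^ 2) w v) =ᶠ[𝓝 u]
      fun w => f w * fderiv ℝ f w v := by
    filter_upwards [hf] with w hw
    rw [((hw.hasFDerivAt.pow 2).const_mul (1 / 2)).fderiv]
    simp only [smul_apply, nsmul_eq_mul, smul_eq_mul]
    ring
  rw [hev.fderiv_eq, (hf.self_of_nhds.hasFDerivAt.fun_mul hdf.hasFDerivAt).fderiv]
  simp only [add_apply, smul_apply, smul_eq_mul]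
  ring

theorem fderiv_homogExt_apply_ne_zero_or_transverseForm_ne_zero {u v : ℝ × ℝ} (hu : u.1 ≠ 0)
    (hl : DifferentiableAt ℝ l (u.2 / u.1)) (hly : l (u.2 / u.1) ≠ 0) (hv : v ≠ 0) :
    fderiv ℝ (homogExt l) u v ≠ 0 ∨ transverseForm u v ≠ 0 := by
  rw [or_iff_not_imp_right, not_not, transverseForm_apply, (hasFDerivAt_homogExt hu hl).fderiv]
  intro hb
  have hv1 : v.1 ≠ 0 := fun hv1 => hv (Prod.ext hv1 (by simp_all))
  simpa [hb] using mul_ne_zero hly hv1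

theorem hessian_of_homogeneous_extension
    (l : ℝ → ℝ) (hl : ContDiff ℝ 2 l) :
    ∀ u : ℝ × ℝ, 0 < u.1 →
      (∀ v : ℝ × ℝ,
        fderiv ℝ (fun w => fderiv ℝ (homogExt l) w v) u v
          = (v.1 * (u.2 / u.1) - v.2) ^ 2 * (deriv (deriv l) (u.2 / u.1) / u.1)) ∧
      ((∀ y, 0 < l y) → (∀ y, 0 < deriv (deriv l) y) →
        ∀ v : ℝ × ℝ, v ≠ 0 →
          fderiv ℝ (fun w => fderiv ℝ (fun z => (1 / 2) * (homogExt l z) ^ 2) w v) u v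
            = (fderiv ℝ (homogExt l) u v) ^ 2
              + homogExt l u * (v.1 * (u.2 / u.1) - v.2) ^ 2
                * (deriv (deriv l) (u.2 / u.1) / u.1) ∧
          0 < fderiv ℝ (fun w => fderiv ℝ (fun z => (1 / 2) * (homogExt l z) ^ 2) w v) u v) := by
  intro u hu
  have hl1 : Differentiable ℝ l := hl.differentiable (by norm_num)
  have hess (v : ℝ × ℝ) :=
    hasFDerivAt_fderiv_homogExt_apply hl1 hu.ne' (hl.differentiable_deriv_two _) v
  have hess_apply (v : ℝ × ℝ) : fderiv ℝ (fun w => fderiv ℝ (homogExt l) w v) u v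
      = (v.1 * (u.2 / u.1) - v.2) ^ 2 * (deriv (deriv l) (u.2 / u.1) / u.1) := by
    rw [(hess v).fderiv, smul_apply, smul_eq_mul, transverseForm_apply]
    ring
  refine ⟨hess_apply, fun hl_pos hl''_pos v hv => ?_⟩
  have hsq := fderiv_fderiv_half_sq_apply (eventually_differentiableAt_homogExt hl1 hu.ne')
    (hess v).differentiableAt
  rw [hess_apply, ← mul_assoc] at hsq
  refine ⟨hsq, hsq ▸ ?_⟩
  have : 0 < homogExt l u := mul_pos hu (hl_pos _)
  have : 0 < deriv (deriv l) (u.2 / u.1) / u.1 := div_pos (hl''_pos _) hu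
  rcases fderiv_homogExt_apply_ne_zero_or_transverseForm_ne_zero hu.ne' (hl1 _) (hl_pos _).ne' hv
    with h | h
  · positivity
  · rw [transverseForm_apply] at h
    positivity
end

section
/- Let L : ℝ³ → ℝ (variables (t,x,v)) be C^∞ and let F : ℝ² × (ℝ² ∖ {0}) → ℝ be C^∞, positively 1-homogeneous in velocity, with F(t,x,(1,y)) = L(t,x,y) for all (t,x,y). Let θ : ℝ → ℝ be C^∞ and set γ(t) = (t, θ(t)). Then for every a < b the following are equivalent: (i) θ satisfies the Euler–Lagrange equation of L on [a,b]; (ii) γ restricted to [a,b] is a critical point of the length functional l_F(γ) = ∫_a^b F(γ(t), γ̇(t)) dt, meaning that for every smooth proper variation Γ : (−ε,ε) × [a,b] → ℝ² of γ (i.e. Γ(0,t) = γ(t), Γ(s,a) = γ(a), Γ(s,b) = γ(b) for all s), one has (d/ds)|_{s=0} ∫_a^b F(Γ(s,t), ∂_t Γ(s,t)) dt = 0. -/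
open intervalIntegral

open Set Metric Polynomial Function
open scoped ContDiff

/-- Partial derivative of a Lagrangian `L(t,x,v)` in the position variable `x`. -/
noncomputable def lagrangianDx (L : ℝ × ℝ × ℝ → ℝ) (t x v : ℝ) : ℝ :=
  deriv (fun x' => L (t, x', v)) x

/-- Partial derivative of a Lagrangian `L(t,x,v)` in the velocity variable `v`. -/
noncomputable def lagrangianDv (L : ℝ × ℝ × ℝ → ℝ) (t x v : ℝ) : ℝ :=
  deriv (fun v' => L (t, x, v')) v

/-- `θ` satisfies the Euler–Lagrange equation of `L` on `[a,b]`: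
`∂ₓL(t,θ,θ′) − d/dt [∂ᵥL(t,θ,θ′)] = 0`. -/
def SatisfiesEulerLagrange (L : ℝ × ℝ × ℝ → ℝ) (θ : ℝ → ℝ) (a b : ℝ) : Prop :=
  ∀ t ∈ Set.Icc a b,
    HasDerivAt (fun s => lagrangianDv L s (θ s) (deriv θ s))
      (lagrangianDx L t (θ t) (deriv θ t)) t



lemma my_param_deriv {Φ : ℝ × ℝ → ℝ} {a b s₀ : ℝ}
    (h : ∀ t ∈ Set.uIcc a b, ContDiffAt ℝ 1 Φ (s₀, t)) :
    IntervalIntegrable (fun t => fderiv ℝ Φ (s₀, t) (1, 0)) MeasureTheory.volume a b ∧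
    HasDerivAt (fun s => ∫ t in a..b, Φ (s, t))
      (∫ t in a..b, fderiv ℝ Φ (s₀, t) (1, 0)) s₀ := by
  classical
  set U : Set (ℝ × ℝ) := {p | ContDiffAt ℝ 1 Φ p} with hUdef
  have hUopen : IsOpen U := by
    rw [isOpen_iff_mem_nhds]
    intro p hp
    have : ContDiffAt ℝ 1 Φ p := hp
    exact this.eventually (by simp)
  have hKU' : ∀ t ∈ uIcc a b, ((s₀ : ℝ), t) ∈ U := fun t ht => h t ht
  have hKU : ({s₀} ×ˢ uIcc a b : Set (ℝ × ℝ)) ⊆ U := by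
    rintro ⟨s, t⟩ ⟨hs, ht⟩
    simp only [mem_singleton_iff] at hs
    subst hs; exact h t ht
  have hKc : IsCompact ({s₀} ×ˢ uIcc a b : Set (ℝ × ℝ)) :=
    isCompact_singleton.prod isCompact_uIcc
  obtain ⟨δ, hδpos, hδ⟩ := hKc.exists_thickening_subset_open hUopen hKU
  -- ball s₀ δ × uIcc a b ⊆ U
  have hball : ∀ s ∈ ball s₀ δ, ∀ t ∈ uIcc a b, (s, t) ∈ U := by
    intro s hs t ht
    apply hδ
    rw [Metric.mem_thickening_iff]
    refine ⟨(s₀, t), ⟨rfl, ht⟩, ?_⟩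
    rw [Prod.dist_eq]
    exact max_lt (mem_ball.mp hs) (by simpa using hδpos)
  have hΦU : ContDiffOn ℝ 1 Φ U := fun p hp => (show ContDiffAt ℝ 1 Φ p from hp).contDiffWithinAt
  have hcontD : ContinuousOn (fun p => fderiv ℝ Φ p (1, 0)) U := by
    exact (hΦU.continuousOn_fderiv_of_isOpen hUopen le_rfl).clm_apply continuousOn_const
  -- compact bound
  set K : Set (ℝ × ℝ) := closedBall s₀ (δ/2) ×ˢ uIcc a b with hKdef
  have hKU : IsCompact K := (isCompact_closedBall _ _).prod isCompact_uIcc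
  have hKsub : K ⊆ U := by
    rintro ⟨s, t⟩ ⟨hs, ht⟩
    exact hball s (lt_of_le_of_lt (mem_closedBall.mp hs) (by linarith)) t ht
  obtain ⟨C, hC⟩ := hKU.exists_bound_of_continuousOn (hcontD.mono hKsub)
  have hmeas : ∀ᶠ s in nhds s₀, MeasureTheory.AEStronglyMeasurable (fun t => Φ (s, t))
      (MeasureTheory.volume.restrict (Set.uIoc a b)) := by
    filter_upwards [ball_mem_nhds s₀ hδpos] with s hs
    apply ContinuousOn.aestronglyMeasurable _ measurableSet_uIoc
    intro t ht
    have := (show ContDiffAt ℝ 1 Φ (s, t) from hball s hs t (uIoc_subset_uIcc ht)).continuousAt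
    exact (this.comp (Continuous.continuousAt (by continuity))).continuousWithinAt
  have hint : IntervalIntegrable (fun t => Φ (s₀, t)) MeasureTheory.volume a b := by
    apply ContinuousOn.intervalIntegrable
    intro t ht
    exact ((h t ht).continuousAt.comp (Continuous.continuousAt (by continuity))).continuousWithinAt
  have hmeas' : MeasureTheory.AEStronglyMeasurable (fun t => fderiv ℝ Φ (s₀, t) (1, 0))
      (MeasureTheory.volume.restrict (Set.uIoc a b)) := by
    apply ContinuousOn.aestronglyMeasurable _ measurableSet_uIoc
    intro t ht
    have : ContinuousWithinAt (fun p => fderiv ℝ Φ p (1, 0)) U (s₀, t) :=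
      hcontD _ (hKU' t (uIoc_subset_uIcc ht))
    exact ((this.continuousAt (hUopen.mem_nhds (hKU' t (uIoc_subset_uIcc ht)))).comp
      (Continuous.continuousAt (by continuity))).continuousWithinAt
  have key := intervalIntegral.hasDerivAt_integral_of_dominated_loc_of_deriv_le
    (F := fun s t => Φ (s, t)) (F' := fun s t => fderiv ℝ Φ (s, t) (1, 0))
    (bound := fun _ => C) (ball_mem_nhds s₀ (half_pos hδpos)) hmeas hint hmeas'
    (MeasureTheory.ae_of_all _ (fun t ht s hs => hC (s, t)
      ⟨mem_closedBall.mpr (le_of_lt (mem_ball.mp hs)), uIoc_subset_uIcc ht⟩))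
    intervalIntegrable_const
    (MeasureTheory.ae_of_all _ (fun t ht s hs => by
      have hmem : (s, t) ∈ U := hball s (lt_of_lt_of_le (mem_ball.mp hs) (by linarith)) t (uIoc_subset_uIcc ht)
      have hd : HasFDerivAt Φ (fderiv ℝ Φ (s, t)) (s, t) :=
        ((show ContDiffAt ℝ 1 Φ (s, t) from hmem).differentiableAt (by simp)).hasFDerivAt
      have hline : HasDerivAt (fun s' : ℝ => ((s' : ℝ), t)) ((1 : ℝ), (0 : ℝ)) s :=
        (hasDerivAt_id s).prodMk (hasDerivAt_const s t)
      exact hd.comp_hasDerivAt s hline))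
  exact key

lemma my_poly_contDiff (p : ℝ[X]) : ContDiff ℝ (⊤ : ℕ∞) (fun t : ℝ => p.eval t) := by
  induction p using Polynomial.induction_on' with
  | add p q hp hq => simpa [Polynomial.eval_add] using hp.add hq
  | monomial n c =>
      simpa [Polynomial.eval_monomial] using (contDiff_const (c := c)).mul (contDiff_id.pow n)

lemma my_fund_lemma {h : ℝ → ℝ} {a b : ℝ} (hab : a < b) (hc : Continuous h)
    (H : ∀ η : ℝ → ℝ, ContDiff ℝ (⊤ : ℕ∞) η → η a = 0 → η b = 0 →
      (∫ t in a..b, h t * η t) = 0) :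
    ∀ t ∈ Set.Icc a b, h t = 0 := by
  set HW : ℝ → ℝ := fun t => ((t - a) * (b - t)) * h t with hHWdef
  have hHWc : Continuous HW := (Continuous.mul (by continuity) (by continuity)).mul hc
  have claim1 : ∀ p : ℝ[X], (∫ t in a..b, HW t * p.eval t) = 0 := by
    intro p
    have hη : ContDiff ℝ (⊤ : ℕ∞) (fun t : ℝ => ((t - a) * (b - t)) * p.eval t) :=
      ((contDiff_id.sub contDiff_const).mul (contDiff_const.sub contDiff_id)).mul
        (my_poly_contDiff p)
    have := H (fun t => ((t - a) * (b - t)) * p.eval t) hη (by ring) (by ring)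
    rw [← this]
    apply intervalIntegral.integral_congr
    intro t _
    dsimp [HW]; ring
  -- ∫ HW^2 = 0
  obtain ⟨M, hM⟩ := (isCompact_Icc (a := a) (b := b)).exists_bound_of_continuousOn
    hHWc.continuousOn
  have hM0 : 0 ≤ M := le_trans (norm_nonneg _) (hM a ⟨le_refl a, hab.le⟩)
  have claim2 : (∫ t in a..b, HW t * HW t) = 0 := by
    by_contra hne
    set r := ∫ t in a..b, HW t * HW t with hr
    have hrpos : 0 < |r| := abs_pos.mpr hne
    set ε : ℝ := |r| / ((M + 1) * (b - a)) with hε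
    have hεpos : 0 < ε := by
      apply div_pos hrpos
      apply mul_pos (by linarith) (by linarith)
    obtain ⟨p, hp⟩ := exists_polynomial_near_of_continuousOn a b HW hHWc.continuousOn
      (ε / 2) (by positivity)
    have key : ‖∫ t in a..b, HW t * (HW t - p.eval t)‖ ≤ (M + 1) * (ε / 2) * |b - a| := by
      apply intervalIntegral.norm_integral_le_of_norm_le_const
      intro t ht
      have ht' : t ∈ Set.Icc a b := by
        rw [Set.uIoc_of_le hab.le] at ht
        exact ⟨ht.1.le, ht.2⟩
      rw [Real.norm_eq_abs, abs_mul]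
      apply mul_le_mul
      · exact le_trans (le_of_eq (Real.norm_eq_abs _).symm) (le_trans (hM t ht') (by linarith))
      · rw [abs_sub_comm]; exact (hp t ht').le
      · exact abs_nonneg _
      · linarith
    have hsplit : (∫ t in a..b, HW t * (HW t - p.eval t)) = r := by
      have h1 : (∫ t in a..b, HW t * (HW t - p.eval t)) =
          (∫ t in a..b, HW t * HW t) - ∫ t in a..b, HW t * p.eval t := by
        rw [← intervalIntegral.integral_sub]
        · apply intervalIntegral.integral_congr; intro t _; ring
        · exact (hHWc.mul hHWc).intervalIntegrable _ _
        · exact (hHWc.mul (my_poly_contDiff p).continuous).intervalIntegrable _ _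
      rw [h1, claim1 p, sub_zero]
    rw [hsplit, Real.norm_eq_abs] at key
    rw [abs_of_pos (by linarith : (0:ℝ) < b - a)] at key
    have hDne : ((M + 1) * (b - a)) ≠ 0 := by
      apply ne_of_gt; apply mul_pos <;> linarith
    have heq : ε * ((M + 1) * (b - a)) = |r| := div_mul_cancel₀ _ hDne
    have h2 : (M + 1) * (ε / 2) * (b - a) = (ε * ((M + 1) * (b - a))) / 2 := by ring
    rw [h2, heq] at key
    linarith
  -- HW = 0 on Icc
  have claim3 : ∀ t ∈ Set.Icc a b, HW t = 0 := by
    intro t₀ ht₀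
    by_contra hne
    have hcl : t₀ ∈ closure (Ioo a b) := by rwa [closure_Ioo hab.ne]
    obtain ⟨t₁, ht₁V, ht₁⟩ := mem_closure_iff.mp hcl {t | HW t ≠ 0}
      (isOpen_ne_fun hHWc continuous_const) hne
    have hopen : IsOpen ({t | 0 < HW t * HW t} ∩ Ioo a b) :=
      (isOpen_lt continuous_const (hHWc.mul hHWc)).inter isOpen_Ioo
    obtain ⟨ε, hεpos, hε⟩ := Metric.isOpen_iff.mp hopen t₁
      ⟨mul_self_pos.mpr ht₁V, ht₁⟩
    have hIb : Ioo (t₁ - ε) (t₁ + ε) = ball t₁ ε := (Real.ball_eq_Ioo t₁ ε).symm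
    have hsubIoo : Ioo (t₁ - ε) (t₁ + ε) ⊆ Ioo a b := by
      rw [hIb]; exact fun x hx => (hε hx).2
    have hac : a ≤ t₁ - ε / 2 := by
      have := (hsubIoo ⟨by linarith, by linarith⟩ :
        (t₁ - 3 * ε / 4) ∈ Ioo a b)
      linarith [this.1]
    have hdb : t₁ + ε / 2 ≤ b := by
      have := (hsubIoo ⟨by linarith, by linarith⟩ :
        (t₁ + 3 * ε / 4) ∈ Ioo a b)
      linarith [this.2]
    have hsq : IntervalIntegrable (fun t => HW t * HW t) MeasureTheory.volume a b :=
      (hHWc.mul hHWc).intervalIntegrable _ _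
    have hmid : 0 < ∫ t in (t₁ - ε/2)..(t₁ + ε/2), HW t * HW t := by
      apply intervalIntegral_pos_of_pos_on ((hHWc.mul hHWc).intervalIntegrable _ _)
      · intro x hx
        have : x ∈ ball t₁ ε := by
          rw [← hIb]; exact ⟨by linarith [hx.1], by linarith [hx.2]⟩
        exact (hε this).1
      · linarith
    have h1 : 0 ≤ ∫ t in a..(t₁ - ε/2), HW t * HW t :=
      intervalIntegral.integral_nonneg hac (fun u _ => mul_self_nonneg _)
    have h3 : 0 ≤ ∫ t in (t₁ + ε/2)..b, HW t * HW t :=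
      intervalIntegral.integral_nonneg hdb (fun u _ => mul_self_nonneg _)
    have hsplit : (∫ t in a..b, HW t * HW t) =
        (∫ t in a..(t₁ - ε/2), HW t * HW t) + (∫ t in (t₁ - ε/2)..(t₁ + ε/2), HW t * HW t)
          + (∫ t in (t₁ + ε/2)..b, HW t * HW t) := by
      rw [intervalIntegral.integral_add_adjacent_intervals,
        intervalIntegral.integral_add_adjacent_intervals] <;>
        exact (hHWc.mul hHWc).intervalIntegrable _ _
    rw [claim2] at hsplit
    linarith
  -- conclude h = 0 on Icc
  have hIoo : ∀ t ∈ Ioo a b, h t = 0 := by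
    intro t ht
    have := claim3 t ⟨ht.1.le, ht.2.le⟩
    have hW : 0 < (t - a) * (b - t) := mul_pos (by linarith [ht.1]) (by linarith [ht.2])
    dsimp [HW] at this
    rcases mul_eq_zero.mp this with h' | h'
    · exact absurd h' hW.ne'
    · exact h'
  intro t ht
  have : Set.Icc a b ⊆ {t | h t = 0} := by
    rw [← closure_Ioo hab.ne]
    apply closure_minimal hIoo (isClosed_eq hc continuous_const)
  exact this ht

lemma my_contDiff_deriv {f : ℝ → ℝ} (hf : ContDiff ℝ ∞ f) : ContDiff ℝ ∞ (deriv f) := by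
  have h1 : ContDiff ℝ ∞ (fun t => fderiv ℝ f t 1) :=
    (hf.fderiv_right (by simp)).clm_apply contDiff_const
  have : (deriv f) = fun t => fderiv ℝ f t 1 := by
    funext t; rw [fderiv_apply_one_eq_deriv]
  rw [this]; exact h1

section Lpart
variable (L : ℝ × ℝ × ℝ → ℝ)


lemma my_L_hasFDerivAt (hL : ContDiff ℝ (⊤ : ℕ∞) L) (p : ℝ × ℝ × ℝ) : HasFDerivAt L (fderiv ℝ L p) p :=
  ((hL.differentiable (by simp)) p).hasFDerivAt

lemma my_lagDx_eq (hL : ContDiff ℝ (⊤ : ℕ∞) L) (t x v : ℝ) :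
    lagrangianDx L t x v = fderiv ℝ L (t, x, v) (((0:ℝ), (1:ℝ), (0:ℝ))) := by
  have hc : HasDerivAt (fun x' : ℝ => ((t, x', v) : ℝ × ℝ × ℝ)) (0, 1, 0) x :=
    (hasDerivAt_const x t).prodMk ((hasDerivAt_id x).prodMk (hasDerivAt_const x v))
  exact ((my_L_hasFDerivAt L hL _).comp_hasDerivAt x hc).deriv

lemma my_lagDv_eq (hL : ContDiff ℝ (⊤ : ℕ∞) L) (t x v : ℝ) :
    lagrangianDv L t x v = fderiv ℝ L (t, x, v) (((0:ℝ), (0:ℝ), (1:ℝ))) := by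
  have hc : HasDerivAt (fun v' : ℝ => ((t, x, v') : ℝ × ℝ × ℝ)) (0, 0, 1) v :=
    (hasDerivAt_const v t).prodMk ((hasDerivAt_const v x).prodMk (hasDerivAt_id v))
  exact ((my_L_hasFDerivAt L hL _).comp_hasDerivAt v hc).deriv

end Lpart

section Fpart
variable (L : ℝ × ℝ × ℝ → ℝ) (F : (ℝ × ℝ) × ℝ × ℝ → ℝ)

lemma my_F_open : IsOpen {p : (ℝ × ℝ) × ℝ × ℝ | p.2 ≠ 0} :=
  isOpen_compl_singleton.preimage continuous_snd

lemma my_F_contDiffAt (hF : ContDiffOn ℝ (⊤ : ℕ∞) F {p : (ℝ × ℝ) × ℝ × ℝ | p.2 ≠ 0}) {x : ℝ × ℝ} {v : ℝ × ℝ} (hv : v ≠ 0) :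
    ContDiffAt ℝ (⊤ : ℕ∞) F (x, v) :=
  hF.contDiffAt (my_F_open.mem_nhds (by simpa using hv))

lemma my_F_hasFDerivAt (hF : ContDiffOn ℝ (⊤ : ℕ∞) F {p : (ℝ × ℝ) × ℝ × ℝ | p.2 ≠ 0}) {x : ℝ × ℝ} {v : ℝ × ℝ} (hv : v ≠ 0) :
    HasFDerivAt F (fderiv ℝ F (x, v)) (x, v) :=
  ((my_F_contDiffAt F hF hv).differentiableAt (by simp)).hasFDerivAt

lemma my_one_y_ne (y : ℝ) : ((1 : ℝ), y) ≠ (0 : ℝ × ℝ) := by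
  simp [Prod.ext_iff]

lemma my_I1 (hL : ContDiff ℝ (⊤ : ℕ∞) L) (hF : ContDiffOn ℝ (⊤ : ℕ∞) F {p : (ℝ × ℝ) × ℝ × ℝ | p.2 ≠ 0}) (hFL : ∀ t x y : ℝ, F ((t, x), (1, y)) = L (t, x, y)) (t x y : ℝ) :
    fderiv ℝ F ((t, x), (1, y)) ((((1:ℝ), (0:ℝ)), ((0:ℝ), (0:ℝ))))
      = fderiv ℝ L (t, x, y) ((1:ℝ), (0:ℝ), (0:ℝ)) := by
  have hcurve : HasDerivAt (fun t' : ℝ => ((((t', x), (1, y))) : (ℝ × ℝ) × ℝ × ℝ))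
      (((1, 0), (0, 0))) t :=
    ((hasDerivAt_id t).prodMk (hasDerivAt_const t x)).prodMk (hasDerivAt_const t ((1:ℝ), y))
  have h1 := (my_F_hasFDerivAt F hF (my_one_y_ne y)).comp_hasDerivAt t hcurve
  have hc2 : HasDerivAt (fun t' : ℝ => ((t', x, y) : ℝ × ℝ × ℝ)) (1, 0, 0) t :=
    (hasDerivAt_id t).prodMk ((hasDerivAt_const t x).prodMk (hasDerivAt_const t y))
  have h2 := (my_L_hasFDerivAt L hL (t, x, y)).comp_hasDerivAt t hc2
  have heq : (F ∘ fun t' : ℝ => ((((t', x), (1, y))) : (ℝ × ℝ) × ℝ × ℝ))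
      = fun t' : ℝ => L (t', x, y) := funext fun t' => hFL t' x y
  rw [heq] at h1
  exact h1.unique h2

lemma my_I2 (hL : ContDiff ℝ (⊤ : ℕ∞) L) (hF : ContDiffOn ℝ (⊤ : ℕ∞) F {p : (ℝ × ℝ) × ℝ × ℝ | p.2 ≠ 0}) (hFL : ∀ t x y : ℝ, F ((t, x), (1, y)) = L (t, x, y)) (t x y : ℝ) :
    fderiv ℝ F ((t, x), (1, y)) ((((0:ℝ), (1:ℝ)), ((0:ℝ), (0:ℝ))))
      = fderiv ℝ L (t, x, y) ((0:ℝ), (1:ℝ), (0:ℝ)) := by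
  have hcurve : HasDerivAt (fun x' : ℝ => ((((t, x'), (1, y))) : (ℝ × ℝ) × ℝ × ℝ))
      (((0, 1), (0, 0))) x :=
    ((hasDerivAt_const x t).prodMk (hasDerivAt_id x)).prodMk (hasDerivAt_const x ((1:ℝ), y))
  have h1 := (my_F_hasFDerivAt F hF (my_one_y_ne y)).comp_hasDerivAt x hcurve
  have hc2 : HasDerivAt (fun x' : ℝ => ((t, x', y) : ℝ × ℝ × ℝ)) (0, 1, 0) x :=
    (hasDerivAt_const x t).prodMk ((hasDerivAt_id x).prodMk (hasDerivAt_const x y))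
  have h2 := (my_L_hasFDerivAt L hL (t, x, y)).comp_hasDerivAt x hc2
  have heq : (F ∘ fun x' : ℝ => ((((t, x'), (1, y))) : (ℝ × ℝ) × ℝ × ℝ))
      = fun x' : ℝ => L (t, x', y) := funext fun x' => hFL t x' y
  rw [heq] at h1
  exact h1.unique h2

lemma my_I3 (hL : ContDiff ℝ (⊤ : ℕ∞) L) (hF : ContDiffOn ℝ (⊤ : ℕ∞) F {p : (ℝ × ℝ) × ℝ × ℝ | p.2 ≠ 0}) (hFL : ∀ t x y : ℝ, F ((t, x), (1, y)) = L (t, x, y)) (t x y : ℝ) :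
    fderiv ℝ F ((t, x), (1, y)) ((((0:ℝ), (0:ℝ)), ((0:ℝ), (1:ℝ))))
      = fderiv ℝ L (t, x, y) ((0:ℝ), (0:ℝ), (1:ℝ)) := by
  have hcurve : HasDerivAt (fun y' : ℝ => ((((t, x), (1, y'))) : (ℝ × ℝ) × ℝ × ℝ))
      (((0, 0), (0, 1))) y :=
    (hasDerivAt_const y ((t:ℝ), x)).prodMk ((hasDerivAt_const y (1:ℝ)).prodMk (hasDerivAt_id y))
  have h1 := (my_F_hasFDerivAt F hF (my_one_y_ne y)).comp_hasDerivAt y hcurve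
  have hc2 : HasDerivAt (fun y' : ℝ => ((t, x, y') : ℝ × ℝ × ℝ)) (0, 0, 1) y :=
    (hasDerivAt_const y t).prodMk ((hasDerivAt_const y x).prodMk (hasDerivAt_id y))
  have h2 := (my_L_hasFDerivAt L hL (t, x, y)).comp_hasDerivAt y hc2
  have heq : (F ∘ fun y' : ℝ => ((((t, x), (1, y'))) : (ℝ × ℝ) × ℝ × ℝ))
      = fun y' : ℝ => L (t, x, y') := funext fun y' => hFL t x y'
  rw [heq] at h1
  exact h1.unique h2

lemma my_I4 (hF : ContDiffOn ℝ (⊤ : ℕ∞) F {p : (ℝ × ℝ) × ℝ × ℝ | p.2 ≠ 0}) (hhom : ∀ (x v : ℝ × ℝ), v ≠ 0 → ∀ lam : ℝ, 0 < lam →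
      F (x, lam • v) = lam * F (x, v))
    (hFL : ∀ t x y : ℝ, F ((t, x), (1, y)) = L (t, x, y)) (t x y : ℝ) :
    fderiv ℝ F ((t, x), (1, y)) ((((0:ℝ), (0:ℝ)), ((1:ℝ), y)))
      = L (t, x, y) := by
  have hne := my_one_y_ne y
  have hFd : HasFDerivAt F (fderiv ℝ F ((t, x), (1, y)))
      ((t, x), (1 : ℝ) • ((1 : ℝ), y)) := by
    rw [one_smul]; exact my_F_hasFDerivAt F hF hne
  have hcurve : HasDerivAt (fun lam : ℝ => (((t, x), lam • ((1:ℝ), y)) : (ℝ × ℝ) × ℝ × ℝ))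
      (((0 : ℝ), (0:ℝ)), (1 : ℝ) • ((1:ℝ), y)) 1 :=
    (hasDerivAt_const 1 ((t : ℝ), x)).prodMk ((hasDerivAt_id 1).smul_const ((1:ℝ), y))
  have h1 := hFd.comp_hasDerivAt 1 hcurve
  rw [one_smul] at h1
  have hev : (fun lam : ℝ => F ((t, x), lam • ((1:ℝ), y)))
      =ᶠ[nhds 1] fun lam : ℝ => lam * L (t, x, y) := by
    filter_upwards [Ioi_mem_nhds (zero_lt_one)] with lam hlam
    rw [hhom (t, x) ((1:ℝ), y) hne lam hlam, hFL]
  have h2 : HasDerivAt (fun lam : ℝ => lam * L (t, x, y)) (L (t, x, y)) 1 := by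
    simpa using (hasDerivAt_id (1:ℝ)).mul_const (L (t, x, y))
  have h2' : HasDerivAt (fun lam : ℝ => F ((t, x), lam • ((1:ℝ), y))) (L (t, x, y)) 1 :=
    h2.congr_of_eventuallyEq hev
  have h1' : HasDerivAt (fun lam : ℝ => F ((t, x), lam • ((1:ℝ), y)))
      (fderiv ℝ F ((t, x), (1, y)) ((((0:ℝ), (0:ℝ)), ((1:ℝ), y)))) 1 := by
    simpa [Function.comp_def] using (h1 : HasDerivAt _ _ _)
  exact h1'.unique h2'

end Fpart

lemma my_one_le_inf : (1 : WithTop ℕ∞) ≤ ∞ := by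
  exact_mod_cast ((by simp) : (1:ℕ∞) ≤ ⊤)

lemma my_backward (L : ℝ × ℝ × ℝ → ℝ) (hL : ContDiff ℝ (⊤ : ℕ∞) L)
    (F : (ℝ × ℝ) × ℝ × ℝ → ℝ)
    (hFL : ∀ t x y : ℝ, F ((t, x), (1, y)) = L (t, x, y))
    (θ : ℝ → ℝ) (hθ : ContDiff ℝ (⊤ : ℕ∞) θ)
    (γ : ℝ → ℝ × ℝ) (hγ : ∀ t, γ t = (t, θ t))
    (a b : ℝ) (hab : a < b)
    (crit : ∀ Γ : ℝ → ℝ → ℝ × ℝ, ContDiff ℝ (⊤ : ℕ∞) (Function.uncurry Γ) →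
        (∀ t, Γ 0 t = γ t) → (∀ s, Γ s a = γ a) → (∀ s, Γ s b = γ b) →
        deriv (fun s => ∫ t in a..b, F (Γ s t, deriv (Γ s) t)) 0 = 0) :
    SatisfiesEulerLagrange L θ a b := by
  have hθ' : ContDiff ℝ ∞ θ := hθ.of_le (by simp)
  have hθd : ContDiff ℝ ∞ (deriv θ) := my_contDiff_deriv hθ'
  have hL' : ContDiff ℝ ∞ L := hL.of_le (by simp)
  set Λv : ℝ → ℝ := fun s => lagrangianDv L s (θ s) (deriv θ s) with hΛvdef
  set Λx : ℝ → ℝ := fun s => lagrangianDx L s (θ s) (deriv θ s) with hΛxdef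
  have hP : ContDiff ℝ ∞ (fun t : ℝ => ((t, θ t, deriv θ t) : ℝ × ℝ × ℝ)) :=
    contDiff_id.prodMk (hθ'.prodMk hθd)
  have hΛveq : Λv = (fun p => fderiv ℝ L p ((0:ℝ),(0:ℝ),(1:ℝ)))
      ∘ (fun t : ℝ => ((t, θ t, deriv θ t) : ℝ × ℝ × ℝ)) :=
    funext fun t => my_lagDv_eq L hL _ _ _
  have hΛxeq : Λx = (fun p => fderiv ℝ L p ((0:ℝ),(1:ℝ),(0:ℝ)))
      ∘ (fun t : ℝ => ((t, θ t, deriv θ t) : ℝ × ℝ × ℝ)) :=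
    funext fun t => my_lagDx_eq L hL _ _ _
  have hΛvs : ContDiff ℝ ∞ Λv := by
    rw [hΛveq]
    exact ((hL'.fderiv_right (by simp)).clm_apply contDiff_const).comp hP
  have hΛxs : ContDiff ℝ ∞ Λx := by
    rw [hΛxeq]
    exact ((hL'.fderiv_right (by simp)).clm_apply contDiff_const).comp hP
  have hψ : ∀ t, HasDerivAt Λv (deriv Λv t) t :=
    fun t => ((hΛvs.differentiable (by simp)) t).hasDerivAt
  have hψc : Continuous (deriv Λv) := (my_contDiff_deriv hΛvs).continuous
  have key : ∀ η : ℝ → ℝ, ContDiff ℝ (⊤ : ℕ∞) η → η a = 0 → η b = 0 →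
      (∫ t in a..b, (deriv Λv t - Λx t) * η t) = 0 := by
    intro η hη hηa hηb
    have hη' : ContDiff ℝ ∞ η := hη.of_le (by simp)
    have hηd : ContDiff ℝ ∞ (deriv η) := my_contDiff_deriv hη'
    have hηda : ∀ t, HasDerivAt η (deriv η t) t :=
      fun t => ((hη.differentiable (by simp)) t).hasDerivAt
    have hθda : ∀ t, HasDerivAt θ (deriv θ t) t :=
      fun t => ((hθ.differentiable (by simp)) t).hasDerivAt
    set Γ : ℝ → ℝ → ℝ × ℝ := fun s t => (t, θ t + s * η t) with hΓdef
    have hΓsm : ContDiff ℝ (⊤ : ℕ∞) (Function.uncurry Γ) := by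
      apply contDiff_snd.prodMk
      exact (hθ.comp contDiff_snd).add (contDiff_fst.mul (hη.comp contDiff_snd))
    have hΓ0 : ∀ t, Γ 0 t = γ t := by intro t; simp [hΓdef, hγ t]
    have hΓa : ∀ s, Γ s a = γ a := by intro s; simp [hΓdef, hγ a, hηa]
    have hΓb : ∀ s, Γ s b = γ b := by intro s; simp [hΓdef, hγ b, hηb]
    have hcrit := crit Γ hΓsm hΓ0 hΓa hΓb
    set Ψ : ℝ × ℝ → ℝ :=
      fun p => L (p.2, θ p.2 + p.1 * η p.2, deriv θ p.2 + p.1 * deriv η p.2) with hΨdef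
    have hΓv : ∀ s t, HasDerivAt (Γ s) ((1 : ℝ), deriv θ t + s * deriv η t) t := by
      intro s t
      exact (hasDerivAt_id t).prodMk ((hθda t).add ((hηda t).const_mul s))
    have hfun : (fun s => ∫ t in a..b, F (Γ s t, deriv (Γ s) t))
        = fun s => ∫ t in a..b, Ψ (s, t) := by
      funext s
      apply intervalIntegral.integral_congr
      intro t _
      show F (Γ s t, deriv (Γ s) t) = Ψ (s, t)
      rw [(hΓv s t).deriv]
      exact hFL t _ _
    have hΨsm : ContDiff ℝ ∞ Ψ := by
      apply hL'.comp
      exact contDiff_snd.prodMk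
        (((hθ'.comp contDiff_snd).add (contDiff_fst.mul (hη'.comp contDiff_snd))).prodMk
          ((hθd.comp contDiff_snd).add (contDiff_fst.mul (hηd.comp contDiff_snd))))
    have hder := my_param_deriv (Φ := Ψ) (a := a) (b := b) (s₀ := 0)
      (fun t _ => (hΨsm.contDiffAt).of_le my_one_le_inf)
    rw [hfun] at hcrit
    have hval : (∫ t in a..b, fderiv ℝ Ψ (0, t) ((1:ℝ), (0:ℝ))) = 0 := by
      rw [← hder.2.deriv]; exact hcrit
    have hpt : ∀ t : ℝ, fderiv ℝ Ψ (0, t) ((1:ℝ), (0:ℝ))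
        = η t * Λx t + deriv η t * Λv t := by
      intro t
      have hline : HasDerivAt (fun s : ℝ => ((s, t) : ℝ × ℝ)) ((1:ℝ), (0:ℝ)) 0 :=
        (hasDerivAt_id 0).prodMk (hasDerivAt_const 0 t)
      have h1 : HasDerivAt (fun s : ℝ => Ψ (s, t)) (fderiv ℝ Ψ (0, t) ((1:ℝ), (0:ℝ))) 0 :=
        by have hd := hΨsm.differentiable (by simp); exact ((hd (0, t)).hasFDerivAt).comp_hasDerivAt 0 hline
      have hcurve : HasDerivAt
          (fun s : ℝ => ((t, θ t + s * η t, deriv θ t + s * deriv η t) : ℝ × ℝ × ℝ))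
          (((0:ℝ), η t, deriv η t)) 0 := by
        refine (hasDerivAt_const 0 t).prodMk (HasDerivAt.prodMk ?_ ?_)
        · simpa using ((hasDerivAt_id (0:ℝ)).mul_const (η t)).const_add (θ t)
        · simpa using ((hasDerivAt_id (0:ℝ)).mul_const (deriv η t)).const_add (deriv θ t)
      have h2 : HasDerivAt (fun s : ℝ => Ψ (s, t))
          (fderiv ℝ L ((t, θ t, deriv θ t) : ℝ × ℝ × ℝ) ((0:ℝ), η t, deriv η t)) 0 := by
        have := (my_L_hasFDerivAt L hL ((t, θ t, deriv θ t) : ℝ × ℝ × ℝ)).comp_hasDerivAt_of_eq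
          0 hcurve (by simp)
        exact this
      have huniq := h1.unique h2
      rw [huniq]
      have hdir : ((0:ℝ), η t, deriv η t)
          = η t • (((0:ℝ),(1:ℝ),(0:ℝ)) : ℝ × ℝ × ℝ)
            + deriv η t • (((0:ℝ),(0:ℝ),(1:ℝ)) : ℝ × ℝ × ℝ) := by
        simp [Prod.ext_iff]
      rw [hdir, map_add, map_smul, map_smul]
      simp only [hΛxdef, hΛvdef, my_lagDx_eq L hL, my_lagDv_eq L hL, smul_eq_mul]
    have hvaleq : (fun t : ℝ => fderiv ℝ Ψ (0, t) ((1:ℝ), (0:ℝ)))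
        = fun t => η t * Λx t + deriv η t * Λv t := funext hpt
    rw [hvaleq] at hval
    -- integration by parts
    have hprod : ∀ t, HasDerivAt (fun u => Λv u * η u)
        (deriv Λv t * η t + Λv t * deriv η t) t := fun t => (hψ t).mul (hηda t)
    have hcont1 : Continuous (fun t => deriv Λv t * η t + Λv t * deriv η t) :=
      (hψc.mul hη.continuous).add (hΛvs.continuous.mul hηd.continuous)
    have hFTC : (∫ t in a..b, (deriv Λv t * η t + Λv t * deriv η t))
        = Λv b * η b - Λv a * η a :=
      intervalIntegral.integral_eq_sub_of_hasDerivAt (fun t _ => hprod t)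
        (hcont1.intervalIntegrable a b)
    rw [hηa, hηb, mul_zero, mul_zero, sub_zero] at hFTC
    have hcont2 : Continuous (fun t => η t * Λx t + deriv η t * Λv t) :=
      (hη.continuous.mul hΛxs.continuous).add (hηd.continuous.mul hΛvs.continuous)
    have hsplit : (∫ t in a..b, (deriv Λv t - Λx t) * η t)
        = (∫ t in a..b, (deriv Λv t * η t + Λv t * deriv η t))
          - ∫ t in a..b, (η t * Λx t + deriv η t * Λv t) := by
      rw [← intervalIntegral.integral_sub (hcont1.intervalIntegrable a b)
        (hcont2.intervalIntegrable a b)]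
      apply intervalIntegral.integral_congr
      intro t _
      ring
    rw [hFTC, hval, sub_zero] at hsplit
    exact hsplit
  have hhc : Continuous (fun t => deriv Λv t - Λx t) := hψc.sub hΛxs.continuous
  have hzero := my_fund_lemma hab hhc key
  intro t ht
  have h0 : deriv Λv t = Λx t := by
    have := hzero t ht
    linarith [this]
  show HasDerivAt Λv (Λx t) t
  rw [← h0]
  exact hψ t

lemma my_forward (L : ℝ × ℝ × ℝ → ℝ) (hL : ContDiff ℝ (⊤ : ℕ∞) L)
    (F : (ℝ × ℝ) × ℝ × ℝ → ℝ)
    (hF : ContDiffOn ℝ (⊤ : ℕ∞) F {p : (ℝ × ℝ) × ℝ × ℝ | p.2 ≠ 0})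
    (hhom : ∀ (x v : ℝ × ℝ), v ≠ 0 → ∀ lam : ℝ, 0 < lam →
      F (x, lam • v) = lam * F (x, v))
    (hFL : ∀ t x y : ℝ, F ((t, x), (1, y)) = L (t, x, y))
    (θ : ℝ → ℝ) (hθ : ContDiff ℝ (⊤ : ℕ∞) θ)
    (a b : ℝ) (hab : a < b)
    (hEL : SatisfiesEulerLagrange L θ a b)
    (Γ : ℝ → ℝ → ℝ × ℝ) (hΓ : ContDiff ℝ (⊤ : ℕ∞) (Function.uncurry Γ))
    (hΓ0 : ∀ t, Γ 0 t = (t, θ t)) (hΓa : ∀ s, Γ s a = (a, θ a))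
    (hΓb : ∀ s, Γ s b = (b, θ b)) :
    deriv (fun s => ∫ t in a..b, F (Γ s t, deriv (Γ s) t)) 0 = 0 := by
  have hθ' : ContDiff ℝ ∞ θ := hθ.of_le (by simp)
  have hθd : ContDiff ℝ ∞ (deriv θ) := my_contDiff_deriv hθ'
  have hθda : ∀ t, HasDerivAt θ (deriv θ t) t :=
    fun t => ((hθ.differentiable (by simp)) t).hasDerivAt
  have hθ'da : ∀ t, HasDerivAt (deriv θ) (deriv (deriv θ) t) t :=
    fun t => ((hθd.differentiable (by simp)) t).hasDerivAt
  have hL' : ContDiff ℝ ∞ L := hL.of_le (by simp)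
  have hΓ' : ContDiff ℝ ∞ (Function.uncurry Γ) := hΓ.of_le (by simp)
  set A : ℝ × ℝ → (ℝ × ℝ) →L[ℝ] (ℝ × ℝ) := fderiv ℝ (Function.uncurry Γ) with hAdef
  have hA : ContDiff ℝ ∞ A := hΓ'.fderiv_right (by simp)
  have hΓdiff : ∀ p, HasFDerivAt (Function.uncurry Γ) (A p) p :=
    fun p => ((hΓ'.differentiable (by simp)) p).hasFDerivAt
  set D : ℝ × ℝ → ℝ × ℝ := fun p => A p ((0:ℝ), (1:ℝ)) with hDdef
  set E : ℝ × ℝ → ℝ × ℝ := fun p => A p ((1:ℝ), (0:ℝ)) with hEdef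
  have hD : ContDiff ℝ ∞ D := hA.clm_apply contDiff_const
  have hE : ContDiff ℝ ∞ E := hA.clm_apply contDiff_const
  have hDt : ∀ s t, HasDerivAt (Γ s) (D (s, t)) t := by
    intro s t
    have hline : HasDerivAt (fun t' : ℝ => ((s, t') : ℝ × ℝ)) ((0:ℝ), (1:ℝ)) t :=
      (hasDerivAt_const t s).prodMk (hasDerivAt_id t)
    exact (hΓdiff (s, t)).comp_hasDerivAt t hline
  have hEs : ∀ s t, HasDerivAt (fun s' => Γ s' t) (E (s, t)) s := by
    intro s t
    have hline : HasDerivAt (fun s' : ℝ => ((s', t) : ℝ × ℝ)) ((1:ℝ), (0:ℝ)) s :=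
      (hasDerivAt_id s).prodMk (hasDerivAt_const s t)
    exact (hΓdiff (s, t)).comp_hasDerivAt s hline
  have hΓ0fun : Γ 0 = fun t => ((t, θ t) : ℝ × ℝ) := funext hΓ0
  have hD00 : ∀ t, D (0, t) = ((1:ℝ), deriv θ t) := by
    intro t
    have h1 := hDt 0 t
    rw [hΓ0fun] at h1
    exact h1.unique ((hasDerivAt_id t).prodMk (hθda t))
  -- γ-values
  have hγval : ∀ t, Function.uncurry Γ (0, t) = (t, θ t) := fun t => hΓ0 t
  set G : ℝ × ℝ → (ℝ × ℝ) × (ℝ × ℝ) := fun p => (Function.uncurry Γ p, D p) with hGdef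
  have hG : ContDiff ℝ ∞ G := hΓ'.prodMk hD
  have hG0 : ∀ t, G (0, t) = ((t, θ t), ((1:ℝ), deriv θ t)) := by
    intro t; rw [hGdef]; dsimp only; rw [hγval t, hD00 t]
  set Φ : ℝ × ℝ → ℝ := fun p => F (G p) with hΦdef
  -- differentiation under integral
  have hΦat : ∀ t ∈ Set.uIcc a b, ContDiffAt ℝ 1 Φ (0, t) := by
    intro t _
    have hFat : ContDiffAt ℝ ∞ F (G (0, t)) := by
      rw [hG0 t]
      exact (my_F_contDiffAt F hF (my_one_y_ne (deriv θ t))).of_le (by simp)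
    exact ((hFat.comp (0, t) (hG.contDiffAt))).of_le my_one_le_inf
  have hder := my_param_deriv (Φ := Φ) (a := a) (b := b) (s₀ := 0) hΦat
  have hfun : (fun s => ∫ t in a..b, F (Γ s t, deriv (Γ s) t))
      = fun s => ∫ t in a..b, Φ (s, t) := by
    funext s
    apply intervalIntegral.integral_congr
    intro t _
    show F (Γ s t, deriv (Γ s) t) = Φ (s, t)
    rw [(hDt s t).deriv]
    rfl
  rw [hfun, hder.2.deriv]
  -- it remains to show the integral of the first variation vanishes
  set f : ℝ → ℝ := fun t => (E (0, t)).1 with hfdef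
  set g : ℝ → ℝ := fun t => (E (0, t)).2 with hgdef
  have hE0 : ContDiff ℝ ∞ (fun t : ℝ => E (0, t)) :=
    hE.comp (contDiff_const.prodMk contDiff_id)
  have hf : ContDiff ℝ ∞ f := contDiff_fst.comp hE0
  have hg : ContDiff ℝ ∞ g := contDiff_snd.comp hE0
  have hfd : ∀ t, HasDerivAt f (deriv f t) t :=
    fun t => ((hf.differentiable (by simp)) t).hasDerivAt
  have hgd : ∀ t, HasDerivAt g (deriv g t) t :=
    fun t => ((hg.differentiable (by simp)) t).hasDerivAt
  have hEft : ∀ t, HasDerivAt (fun t' => E (0, t')) ((deriv f t, deriv g t)) t :=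
    fun t => (hfd t).prodMk (hgd t)
  -- f and g vanish at the endpoints
  have hfa : E (0, a) = 0 := by
    have h1 := hEs 0 a
    have h2 : (fun s' => Γ s' a) = fun _ : ℝ => ((a, θ a) : ℝ × ℝ) := funext hΓa
    rw [h2] at h1
    exact h1.unique (hasDerivAt_const 0 _)
  have hfb : E (0, b) = 0 := by
    have h1 := hEs 0 b
    have h2 : (fun s' => Γ s' b) = fun _ : ℝ => ((b, θ b) : ℝ × ℝ) := funext hΓb
    rw [h2] at h1
    exact h1.unique (hasDerivAt_const 0 _)
  -- the t-derivative of E(0, ·) equals the (1,0)-derivative of D via Clairaut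
  have hsymm : ∀ t : ℝ, fderiv ℝ D (0, t) ((1:ℝ), (0:ℝ)) = (deriv f t, deriv g t) := by
    intro t
    have hAdiff : DifferentiableAt ℝ A (0, t) :=
      (hA.differentiable (by simp)) (0, t)
    have hstep1 : fderiv ℝ D (0, t) ((1:ℝ), (0:ℝ))
        = fderiv ℝ A (0, t) ((1:ℝ), (0:ℝ)) ((0:ℝ), (1:ℝ)) := by
      rw [hDdef]
      rw [fderiv_clm_apply hAdiff (differentiableAt_const _)]
      simp
    have hsym : IsSymmSndFDerivAt ℝ (Function.uncurry Γ) (0, t) :=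
      (hΓ.contDiffAt).isSymmSndFDerivAt (by simp; exact WithTop.coe_le_coe.mpr le_top)
    have hstep2 : fderiv ℝ A (0, t) ((1:ℝ), (0:ℝ)) ((0:ℝ), (1:ℝ))
        = fderiv ℝ A (0, t) ((0:ℝ), (1:ℝ)) ((1:ℝ), (0:ℝ)) := hsym _ _
    have hstep3 : fderiv ℝ E (0, t) ((0:ℝ), (1:ℝ))
        = fderiv ℝ A (0, t) ((0:ℝ), (1:ℝ)) ((1:ℝ), (0:ℝ)) := by
      rw [hEdef]
      rw [fderiv_clm_apply hAdiff (differentiableAt_const _)]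
      simp
    have hstep4 : HasDerivAt (fun t' => E (0, t')) (fderiv ℝ E (0, t) ((0:ℝ), (1:ℝ))) t := by
      have hline : HasDerivAt (fun t' : ℝ => ((0, t') : ℝ × ℝ)) ((0:ℝ), (1:ℝ)) t :=
        (hasDerivAt_const t (0:ℝ)).prodMk (hasDerivAt_id t)
      exact (((hE.differentiable (by simp)) (0, t)).hasFDerivAt).comp_hasDerivAt t hline
    have hstep5 : fderiv ℝ E (0, t) ((0:ℝ), (1:ℝ)) = (deriv f t, deriv g t) :=
      hstep4.unique (hEft t)
    rw [hstep1, hstep2, ← hstep3, hstep5]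
  -- the pointwise value of the first variation integrand
  have hq : ∀ t : ℝ, fderiv ℝ Φ (0, t) ((1:ℝ), (0:ℝ))
      = fderiv ℝ F ((t, θ t), ((1:ℝ), deriv θ t))
          ((((f t, g t) : ℝ × ℝ), ((deriv f t, deriv g t) : ℝ × ℝ))) := by
    intro t
    have hDdiff : HasFDerivAt D (fderiv ℝ D (0, t)) (0, t) :=
      ((hD.differentiable (by simp)) (0, t)).hasFDerivAt
    have hGd : HasFDerivAt G ((A (0, t)).prod (fderiv ℝ D (0, t))) (0, t) :=
      (hΓdiff (0, t)).prodMk hDdiff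
    have hFd : HasFDerivAt F (fderiv ℝ F (G (0, t))) (G (0, t)) := by
      rw [hG0 t]
      exact my_F_hasFDerivAt F hF (my_one_y_ne (deriv θ t))
    have hcomp : HasFDerivAt Φ
        ((fderiv ℝ F (G (0, t))).comp ((A (0, t)).prod (fderiv ℝ D (0, t)))) (0, t) :=
      hFd.comp (0, t) hGd
    rw [hcomp.fderiv]
    have : ((A (0, t)).prod (fderiv ℝ D (0, t))) ((1:ℝ), (0:ℝ))
        = (((f t, g t) : ℝ × ℝ), ((deriv f t, deriv g t) : ℝ × ℝ)) := by
      have h1 : A (0, t) ((1:ℝ), (0:ℝ)) = (f t, g t) := rfl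
      rw [ContinuousLinearMap.prod_apply, h1, hsymm t]
    rw [ContinuousLinearMap.comp_apply, this, hG0 t]
  -- FTC with the boundary function B
  set Λv : ℝ → ℝ := fun u => lagrangianDv L u (θ u) (deriv θ u) with hΛvdef
  set B : ℝ → ℝ := fun u =>
    (L (u, θ u, deriv θ u) - deriv θ u * Λv u) * f u + Λv u * g u with hBdef
  have hBderiv : ∀ t ∈ Set.uIcc a b,
      HasDerivAt B (fderiv ℝ Φ (0, t) ((1:ℝ), (0:ℝ))) t := by
    intro t ht
    rw [Set.uIcc_of_le hab.le] at ht
    have hELt : HasDerivAt Λv (lagrangianDx L t (θ t) (deriv θ t)) t := hEL t ht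
    have hLP : HasDerivAt (fun u => L (u, θ u, deriv θ u))
        (fderiv ℝ L ((t, θ t, deriv θ t) : ℝ × ℝ × ℝ)
          ((1:ℝ), deriv θ t, deriv (deriv θ) t)) t := by
      have hcurve : HasDerivAt (fun u : ℝ => ((u, θ u, deriv θ u) : ℝ × ℝ × ℝ))
          ((1:ℝ), deriv θ t, deriv (deriv θ) t) t :=
        (hasDerivAt_id t).prodMk ((hθda t).prodMk (hθ'da t))
      exact (my_L_hasFDerivAt L hL _).comp_hasDerivAt t hcurve
    have h1 : HasDerivAt (fun u => L (u, θ u, deriv θ u) - deriv θ u * Λv u)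
        (fderiv ℝ L ((t, θ t, deriv θ t) : ℝ × ℝ × ℝ)
            ((1:ℝ), deriv θ t, deriv (deriv θ) t)
          - (deriv (deriv θ) t * Λv t + deriv θ t * lagrangianDx L t (θ t) (deriv θ t))) t :=
      hLP.sub ((hθ'da t).mul hELt)
    have hB' := (h1.mul (hfd t)).add (hELt.mul (hgd t))
    have hval : fderiv ℝ Φ (0, t) ((1:ℝ), (0:ℝ))
        = (fderiv ℝ L ((t, θ t, deriv θ t) : ℝ × ℝ × ℝ)
              ((1:ℝ), deriv θ t, deriv (deriv θ) t)
            - (deriv (deriv θ) t * Λv t + deriv θ t * lagrangianDx L t (θ t) (deriv θ t)))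
            * f t
          + (L (t, θ t, deriv θ t) - deriv θ t * Λv t) * deriv f t
          + (lagrangianDx L t (θ t) (deriv θ t) * g t + Λv t * deriv g t) := by
      rw [hq t]
      have hdir : ((((f t, g t) : ℝ × ℝ), ((deriv f t, deriv g t) : ℝ × ℝ))
            : (ℝ × ℝ) × ℝ × ℝ)
          = f t • ((((1:ℝ), (0:ℝ)), ((0:ℝ), (0:ℝ))) : (ℝ × ℝ) × ℝ × ℝ)
            + g t • ((((0:ℝ), (1:ℝ)), ((0:ℝ), (0:ℝ))) : (ℝ × ℝ) × ℝ × ℝ)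
            + deriv f t • ((((0:ℝ), (0:ℝ)), ((1:ℝ), deriv θ t)) : (ℝ × ℝ) × ℝ × ℝ)
            + (deriv g t - deriv f t * deriv θ t)
                • ((((0:ℝ), (0:ℝ)), ((0:ℝ), (1:ℝ))) : (ℝ × ℝ) × ℝ × ℝ) := by
        simp [Prod.ext_iff]
      rw [hdir, map_add, map_add, map_add, map_smul, map_smul, map_smul, map_smul]
      rw [my_I1 L F hL hF hFL t (θ t) (deriv θ t), my_I2 L F hL hF hFL t (θ t) (deriv θ t),
        my_I3 L F hL hF hFL t (θ t) (deriv θ t), my_I4 L F hF hhom hFL t (θ t) (deriv θ t)]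
      -- express the Lagrangian partials via the fderiv of L and the curve derivative
      have hdecomp : fderiv ℝ L ((t, θ t, deriv θ t) : ℝ × ℝ × ℝ)
            ((1:ℝ), deriv θ t, deriv (deriv θ) t)
          = fderiv ℝ L ((t, θ t, deriv θ t) : ℝ × ℝ × ℝ) ((1:ℝ), (0:ℝ), (0:ℝ))
            + deriv θ t * fderiv ℝ L ((t, θ t, deriv θ t) : ℝ × ℝ × ℝ) ((0:ℝ), (1:ℝ), (0:ℝ))
            + deriv (deriv θ) t
              * fderiv ℝ L ((t, θ t, deriv θ t) : ℝ × ℝ × ℝ) ((0:ℝ), (0:ℝ), (1:ℝ)) := by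
        have : ((1:ℝ), deriv θ t, deriv (deriv θ) t)
            = (((1:ℝ), (0:ℝ), (0:ℝ)) : ℝ × ℝ × ℝ)
              + deriv θ t • (((0:ℝ), (1:ℝ), (0:ℝ)) : ℝ × ℝ × ℝ)
              + deriv (deriv θ) t • (((0:ℝ), (0:ℝ), (1:ℝ)) : ℝ × ℝ × ℝ) := by
          simp [Prod.ext_iff]
        rw [this, map_add, map_add, map_smul, map_smul]
        simp [smul_eq_mul]
      rw [hdecomp]
      simp only [hΛvdef, my_lagDx_eq L hL, my_lagDv_eq L hL, smul_eq_mul]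
      ring
    rw [hval]
    exact hB'
  have hIcc : (∫ t in a..b, fderiv ℝ Φ (0, t) ((1:ℝ), (0:ℝ))) = B b - B a :=
    intervalIntegral.integral_eq_sub_of_hasDerivAt hBderiv hder.1
  rw [hIcc]
  have hfa1 : f a = 0 := by rw [hfdef]; dsimp only; rw [hfa]; rfl
  have hga1 : g a = 0 := by rw [hgdef]; dsimp only; rw [hfa]; rfl
  have hfb1 : f b = 0 := by rw [hfdef]; dsimp only; rw [hfb]; rfl
  have hgb1 : g b = 0 := by rw [hgdef]; dsimp only; rw [hfb]; rfl
  rw [hBdef]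
  dsimp only
  rw [hfa1, hga1, hfb1, hgb1]
  ring


theorem euler_lagrange_iff_critical_for_finsler_length
    (L : ℝ × ℝ × ℝ → ℝ) (hL : ContDiff ℝ (⊤ : ℕ∞) L)
    (F : (ℝ × ℝ) × ℝ × ℝ → ℝ)
    (hF : ContDiffOn ℝ (⊤ : ℕ∞) F {p : (ℝ × ℝ) × ℝ × ℝ | p.2 ≠ 0})
    (hhom : ∀ (x v : ℝ × ℝ), v ≠ 0 → ∀ lam : ℝ, 0 < lam →
      F (x, lam • v) = lam * F (x, v))
    (hFL : ∀ t x y : ℝ, F ((t, x), (1, y)) = L (t, x, y))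
    (θ : ℝ → ℝ) (hθ : ContDiff ℝ (⊤ : ℕ∞) θ)
    (γ : ℝ → ℝ × ℝ) (hγ : ∀ t, γ t = (t, θ t))
    (a b : ℝ) (hab : a < b) :
    SatisfiesEulerLagrange L θ a b ↔
      (∀ Γ : ℝ → ℝ → ℝ × ℝ, ContDiff ℝ (⊤ : ℕ∞) (Function.uncurry Γ) →
        (∀ t, Γ 0 t = γ t) → (∀ s, Γ s a = γ a) → (∀ s, Γ s b = γ b) →
        deriv (fun s => ∫ t in a..b, F (Γ s t, deriv (Γ s) t)) 0 = 0) := by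
  constructor
  · intro hEL Γ hΓsm h0 ha hb
    exact my_forward L hL F hF hhom hFL θ hθ a b hab hEL Γ hΓsm
      (fun t => by rw [h0 t, hγ t]) (fun s => by rw [ha s, hγ a])
      (fun s => by rw [hb s, hγ b])
  · intro hcrit
    exact my_backward L hL F hFL θ hθ γ hγ a b hab hcrit
end

section
/- Let D > 0 and let G : ℝ³ → ℝ be C¹ with G(t,x,y) = 0 whenever |y| ≥ D. Then every maximal solution θ of the second-order ODE θ″(t) = G(t, θ(t), θ′(t)) with initial conditions θ(t₀) = x₀, θ′(t₀) = y₀ is defined on all of ℝ, and satisfies |θ′(t)| ≤ max(D, |y₀|) for all t ∈ ℝ. -/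
/-!
A solution whose velocity ever reaches `|y| ≥ D` coincides, by uniqueness, with the straight line
of that velocity, because `G` vanishes there; hence the velocity stays bounded by `max D |y₀|` and
the position grows at most linearly. Solutions therefore never leave a compact box on bounded time
intervals, so truncating the vector field outside that box does not change them, and the
truncated, globally Lipschitz field has solutions on every bounded interval by Picard–Lindelöf.
Uniqueness glues these into a global solution extending the given one.
-/

open Set Metric Filter Topology NNReal

section Uniqueness

variable {E : Type*} [NormedAddCommGroup E] [NormedSpace ℝ E] {F : ℝ × E → E} {f g : ℝ → E}

theorem eventuallyEq_of_hasDerivAt_of_locallyLipschitz (hF : LocallyLipschitz F) {t₀ : ℝ}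
    (hf : ∀ᶠ t in 𝓝 t₀, HasDerivAt f (F (t, f t)) t)
    (hg : ∀ᶠ t in 𝓝 t₀, HasDerivAt g (F (t, g t)) t) (heq : f t₀ = g t₀) :
    f =ᶠ[𝓝 t₀] g := by
  obtain ⟨K, U, hU, hFU⟩ := hF (t₀, f t₀)
  have hmem : ∀ {u : ℝ → E}, u t₀ = f t₀ → (∀ᶠ t in 𝓝 t₀, HasDerivAt u (F (t, u t)) t) →
      ∀ᶠ t in 𝓝 t₀, HasDerivAt u (F (t, u t)) t ∧ (t, u t) ∈ U := fun hu₀ hu =>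
    hu.and <| (continuousAt_id.prodMk hu.self_of_nhds.continuousAt).preimage_mem_nhds
      (by rwa [id, hu₀])
  refine ODE_solution_unique_of_eventually (v := fun t x => F (t, x)) (K := K)
    (s := fun t => {x | (t, x) ∈ U}) (.of_forall fun t => ?_) (hmem rfl hf) (hmem heq.symm hg) heq
  rw [← mul_one K]
  exact hFU.comp (LipschitzWith.prodMk_left t).lipschitzOnWith fun _ hx => hx

theorem eqOn_of_hasDerivAt_of_locallyLipschitz (hF : LocallyLipschitz F) {J : Set ℝ}
    (hJo : IsOpen J) (hJc : IsPreconnected J)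
    (hf : ∀ t ∈ J, HasDerivAt f (F (t, f t)) t) (hg : ∀ t ∈ J, HasDerivAt g (F (t, g t)) t)
    {t₀ : ℝ} (ht₀ : t₀ ∈ J) (heq : f t₀ = g t₀) : EqOn f g J := by
  have hloc : ∀ t ∈ J, f t = g t → f =ᶠ[𝓝 t] g := fun t ht =>
    eventuallyEq_of_hasDerivAt_of_locallyLipschitz hF
      (eventually_of_mem (hJo.mem_nhds ht) hf) (eventually_of_mem (hJo.mem_nhds ht) hg)
  have hsub : J ⊆ {t | f =ᶠ[𝓝 t] g} := by
    refine hJc.subset_of_closure_inter_subset isOpen_setOfPred_eventually_nhds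
      ⟨t₀, ht₀, hloc t₀ ht₀ heq⟩ fun t ⟨hcl, ht⟩ => hloc t ht ?_
    exact tendsto_nhds_unique_of_frequently_eq (hf t ht).continuousAt (hg t ht).continuousAt
      ((mem_closure_iff_frequently.mp hcl).mono fun _ hs => hs.eq_of_nhds)
  exact fun t ht => (hsub ht).eq_of_nhds

end Uniqueness

section Globalization

variable {E : Type*} [NormedAddCommGroup E] [NormedSpace ℝ E] {F : ℝ × E → E}

theorem exists_forall_hasDerivAt_of_forall_ball (hF : LocallyLipschitz F) {t₀ : ℝ} {x₀ : E}
    (h : ∀ T > 0, ∃ α : ℝ → E, α t₀ = x₀ ∧ ∀ t ∈ ball t₀ T, HasDerivAt α (F (t, α t)) t) :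
    ∃ γ : ℝ → E, γ t₀ = x₀ ∧ ∀ t, HasDerivAt γ (F (t, γ t)) t := by
  choose α hα₀ hα using fun n : ℕ => h (n + 1) n.cast_add_one_pos
  have hcompat : ∀ m n, m ≤ n → EqOn (α m) (α n) (ball t₀ (m + 1)) := fun m n hmn =>
    have hsub : ball t₀ (m + 1 : ℝ) ⊆ ball t₀ (n + 1) := ball_subset_ball (by gcongr)
    eqOn_of_hasDerivAt_of_locallyLipschitz hF isOpen_ball (convex_ball _ _).isPreconnected
      (hα m) (fun t ht => hα n t (hsub ht)) (mem_ball_self m.cast_add_one_pos)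
      ((hα₀ m).trans (hα₀ n).symm)
  let index (t : ℝ) : ℕ := ⌈dist t t₀⌉₊
  have hmem : ∀ t, t ∈ ball t₀ (index t + 1) := fun t =>
    mem_ball.mpr <| (Nat.le_ceil _).trans_lt (lt_add_one _)
  have hglue : ∀ n : ℕ, ∀ t ∈ ball t₀ (n + 1), α (index t) t = α n t := fun n t ht =>
    (le_total (index t) n).elim (fun h => hcompat _ n h (hmem t))
      fun h => (hcompat n _ h ht).symm
  refine ⟨fun t => α (index t) t, hα₀ _, fun t => ?_⟩
  refine (hα (index t) t (hmem t)).congr_of_eventuallyEq ?_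
  filter_upwards [isOpen_ball.mem_nhds (hmem t)] with s hs using hglue _ s hs

end Globalization

section Existence

variable {E : Type*} [NormedAddCommGroup E] [NormedSpace ℝ E] [CompleteSpace E]

theorem exists_forall_mem_Ioo_hasDerivAt_of_lipschitzWith {v : ℝ → E → E} {a b t₀ : ℝ}
    (ht₀ : t₀ ∈ Icc a b) {K L : ℝ≥0} (hlip : ∀ t ∈ Icc a b, LipschitzWith K (v t))
    (hcont : ∀ x, ContinuousOn (v · x) (Icc a b)) (hbound : ∀ t ∈ Icc a b, ∀ x, ‖v t x‖ ≤ L)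
    (x₀ : E) : ∃ α : ℝ → E, α t₀ = x₀ ∧ ∀ t ∈ Ioo a b, HasDerivAt α (v t (α t)) t := by
  have hPL : IsPicardLindelof v ⟨t₀, ht₀⟩ x₀ ⟨L * max (b - t₀) (t₀ - a), by
      have := ht₀.1; positivity⟩ 0 L K :=
    { lipschitzOnWith := fun t ht => (hlip t ht).lipschitzOnWith
      continuousOn := fun x _ => hcont x
      norm_le := fun t ht x _ => hbound t ht x
      mul_max_le := by rw [NNReal.coe_zero, sub_zero]; exact le_rfl }
  obtain ⟨α, hα₀, hα⟩ := hPL.exists_eq_forall_mem_Icc_hasDerivWithinAt₀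
  exact ⟨α, hα₀, fun t ht =>
    (hα t (Ioo_subset_Icc_self ht)).hasDerivAt (Icc_mem_nhds ht.1 ht.2)⟩

theorem exists_forall_mem_Ioo_hasDerivAt_comp_of_locallyLipschitz {F : ℝ × E → E}
    (hF : LocallyLipschitz F) {r : E → E} {Kr : ℝ≥0} (hr : LipschitzWith Kr r) {S : Set E}
    (hS : IsCompact S) (hrS : ∀ x, r x ∈ S) {a b t₀ : ℝ} (ht₀ : t₀ ∈ Icc a b) (x₀ : E) :
    ∃ α : ℝ → E, α t₀ = x₀ ∧ ∀ t ∈ Ioo a b, HasDerivAt α (F (t, r (α t))) t := by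
  have hB : IsCompact (Icc a b ×ˢ S) := isCompact_Icc.prod hS
  obtain ⟨K, hK⟩ := hF.locallyLipschitzOn.exists_lipschitzOnWith_of_compact hB
  obtain ⟨L, hL⟩ := hB.exists_bound_of_continuousOn hF.continuous.continuousOn
  refine exists_forall_mem_Ioo_hasDerivAt_of_lipschitzWith (v := fun t x => F (t, r x))
    (K := K * (1 * Kr)) (L := L.toNNReal) ht₀ (fun t ht => ?_) (fun x => ?_) (fun t ht x => ?_) x₀
  · exact lipschitzOnWith_univ.mp <|
      hK.comp ((LipschitzWith.prodMk_left t).comp hr).lipschitzOnWith fun x _ => ⟨ht, hrS x⟩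
  · exact hF.continuous.comp_continuousOn (continuousOn_id.prodMk continuousOn_const)
  · exact (hL _ ⟨ht, hrS x⟩).trans (Real.le_coe_toNNReal L)

end Existence

theorem le_abs_projIcc {D M y : ℝ} (h : -M ≤ M) (hDM : D ≤ M) (hy : D ≤ |y|) :
    D ≤ |(projIcc (-M) M h y : ℝ)| := by
  have hM : 0 ≤ M := by linarith
  rcases lt_or_ge y (-M) with hlt | hge
  · rw [projIcc_of_le_left h hlt.le, abs_neg, abs_of_nonneg hM]; exact hDM
  rcases le_or_gt y M with hle | hgt
  · rwa [projIcc_of_mem h ⟨hge, hle⟩]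
  · rw [projIcc_of_right_le h hgt.le, abs_of_nonneg hM]; exact hDM

theorem abs_projIcc_le (M y : ℝ) (h : -M ≤ M) : |(projIcc (-M) M h y : ℝ)| ≤ M :=
  abs_le.mpr (projIcc (-M) M h y).2

def secondOrderField (G : ℝ × ℝ × ℝ → ℝ) (q : ℝ × ℝ × ℝ) : ℝ × ℝ := (q.2.2, G q)

theorem contDiff_secondOrderField {G : ℝ × ℝ × ℝ → ℝ} (hG : ContDiff ℝ 1 G) :
    ContDiff ℝ 1 (secondOrderField G) :=
  (contDiff_snd.comp contDiff_snd).prodMk hG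

section VelocityBound

variable {φ : ℝ → ℝ} {W : ℝ × ℝ × ℝ → ℝ} {D : ℝ} {J : Set ℝ} {f : ℝ → ℝ × ℝ}

theorem snd_eq_of_le_abs_snd (hF : LocallyLipschitz fun q : ℝ × ℝ × ℝ => (φ q.2.2, W q))
    (hW : ∀ t x y, D ≤ |y| → W (t, x, y) = 0) (hJo : IsOpen J) (hJc : IsPreconnected J)
    (hf : ∀ t ∈ J, HasDerivAt f (φ (f t).2, W (t, f t)) t) {t₀ t₁ : ℝ} (ht₀ : t₀ ∈ J)
    (ht₁ : t₁ ∈ J) (hD : D ≤ |(f t₁).2|) : (f t₀).2 = (f t₁).2 := by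
  set y₁ := (f t₁).2
  let ℓ (t : ℝ) : ℝ × ℝ := ((f t₁).1 + (t - t₁) * φ y₁, y₁)
  have hℓ : ∀ t ∈ J, HasDerivAt ℓ (φ (ℓ t).2, W (t, ℓ t)) t := fun t _ => by
    rw [hW _ _ _ hD]
    simpa using (((hasDerivAt_id t).sub_const t₁).mul_const (φ y₁)).const_add (f t₁).1
      |>.prodMk (hasDerivAt_const t y₁)
  have hfℓ : f t₀ = ℓ t₀ := eqOn_of_hasDerivAt_of_locallyLipschitz hF hJo hJc hf hℓ ht₁
    (Prod.ext (by simp [ℓ]) rfl) ht₀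
  exact (Prod.ext_iff.mp hfℓ).2

theorem abs_snd_le_max (hF : LocallyLipschitz fun q : ℝ × ℝ × ℝ => (φ q.2.2, W q))
    (hW : ∀ t x y, D ≤ |y| → W (t, x, y) = 0) (hJo : IsOpen J) (hJc : IsPreconnected J)
    (hf : ∀ t ∈ J, HasDerivAt f (φ (f t).2, W (t, f t)) t) {t₀ t : ℝ} (ht₀ : t₀ ∈ J)
    (ht : t ∈ J) : |(f t).2| ≤ max D |(f t₀).2| := by
  by_cases hD : D ≤ |(f t).2|
  · rw [snd_eq_of_le_abs_snd hF hW hJo hJc hf ht₀ ht hD]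
    exact le_max_right _ _
  · exact le_max_of_le_left (not_le.mp hD).le

end VelocityBound

theorem exists_forall_mem_ball_hasDerivAt_secondOrderField {G : ℝ × ℝ × ℝ → ℝ}
    (hG : ContDiff ℝ 1 G) {D : ℝ} (hvanish : ∀ t x y, D ≤ |y| → G (t, x, y) = 0)
    (t₀ x₀ y₀ : ℝ) {T : ℝ} (hT : 0 < T) :
    ∃ f : ℝ → ℝ × ℝ, f t₀ = (x₀, y₀) ∧
      ∀ t ∈ ball t₀ T, HasDerivAt f (secondOrderField G (t, f t)) t := by
  set M := max D |y₀|
  have hM : 0 ≤ M := (abs_nonneg y₀).trans (le_max_right _ _)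
  have hMy : -M ≤ M := neg_le_self hM
  have hMx : x₀ - M * T ≤ x₀ + M * T := by nlinarith
  -- truncate the position and the velocity to the box in which the solution will turn out to lie
  let πx (x : ℝ) : ℝ := projIcc _ _ hMx x
  let πy (y : ℝ) : ℝ := projIcc _ _ hMy y
  let r (p : ℝ × ℝ) : ℝ × ℝ := (πx p.1, πy p.2)
  have hr : LipschitzWith _ r :=
    ((LipschitzWith.subtype_val _).comp (LipschitzWith.projIcc hMx) |>.comp
      LipschitzWith.prod_fst).prodMk
    ((LipschitzWith.subtype_val _).comp (LipschitzWith.projIcc hMy) |>.comp LipschitzWith.prod_snd)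
  have hF : LocallyLipschitz (secondOrderField G) :=
    (contDiff_secondOrderField hG).locallyLipschitz
  obtain ⟨f, hf₀, hf⟩ := exists_forall_mem_Ioo_hasDerivAt_comp_of_locallyLipschitz hF hr
    (isCompact_Icc.prod isCompact_Icc)
    (fun p => ⟨(projIcc _ _ hMx p.1).2, (projIcc _ _ hMy p.2).2⟩)
    (⟨by linarith, by linarith⟩ : t₀ ∈ Icc (t₀ - T) (t₀ + T)) (x₀, y₀)
  rw [← Real.ball_eq_Ioo] at hf
  have hvel : ∀ t ∈ ball t₀ T, |(f t).2| ≤ M := fun t ht => by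
    have hFr : LocallyLipschitz fun q : ℝ × ℝ × ℝ => (πy q.2.2, G (q.1, r q.2)) :=
      hF.comp (LipschitzWith.prod_fst.prodMk (hr.comp LipschitzWith.prod_snd)).locallyLipschitz
    have := abs_snd_le_max hFr
      (fun t x y hy => hvanish _ _ _ (le_abs_projIcc hMy (le_max_left _ _) hy))
      isOpen_ball (convex_ball _ _).isPreconnected hf (mem_ball_self hT) ht
    rwa [hf₀] at this
  have hpos : ∀ t ∈ ball t₀ T, (f t).1 ∈ Icc (x₀ - M * T) (x₀ + M * T) := fun t ht => by
    have hX : ∀ s ∈ ball t₀ T, HasDerivWithinAt (fun s => (f s).1) (πy (f s).2) (ball t₀ T) s :=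
      fun s hs => ((ContinuousLinearMap.fst ℝ ℝ ℝ).hasFDerivAt.comp_hasDerivAt s
        (hf s hs)).hasDerivWithinAt
    have hlip := (convex_ball t₀ T).norm_image_sub_le_of_norm_hasDerivWithin_le hX
      (fun s _ => abs_projIcc_le M _ hMy) (mem_ball_self hT) ht
    rw [hf₀, Real.norm_eq_abs, Real.norm_eq_abs] at hlip
    rw [← mem_Icc_iff_abs_le, abs_sub_comm]
    calc |(f t).1 - x₀| ≤ M * |t - t₀| := hlip
      _ ≤ M * T := by gcongr; exact (mem_ball.mp ht).le
  have hfix : ∀ t ∈ ball t₀ T, r (f t) = f t := fun t ht =>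
    Prod.ext (congrArg Subtype.val (projIcc_of_mem hMx (hpos t ht)))
      (congrArg Subtype.val (projIcc_of_mem hMy (abs_le.mp (hvel t ht))))
  exact ⟨f, hf₀, fun t ht => hfix t ht ▸ hf t ht⟩

theorem global_existence_of_euler_lagrange_flow_general
    (D : ℝ)
    (G : ℝ × ℝ × ℝ → ℝ) (hG : ContDiff ℝ 1 G)
    (hvanish : ∀ t x y : ℝ, D ≤ |y| → G (t, x, y) = 0)
    (t₀ x₀ y₀ : ℝ)
    (I : Set ℝ) (hIopen : IsOpen I) (hIconn : I.OrdConnected) (ht₀ : t₀ ∈ I)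
    (θ θ' : ℝ → ℝ)
    (hθ : ∀ t ∈ I, HasDerivAt θ (θ' t) t)
    (hθ' : ∀ t ∈ I, HasDerivAt θ' (G (t, θ t, θ' t)) t)
    (hinit : θ t₀ = x₀) (hinit' : θ' t₀ = y₀) :
    ∃ Θ Θ' : ℝ → ℝ,
      (∀ t, HasDerivAt Θ (Θ' t) t) ∧
      (∀ t, HasDerivAt Θ' (G (t, Θ t, Θ' t)) t) ∧
      (∀ t ∈ I, Θ t = θ t ∧ Θ' t = θ' t) ∧
      (∀ t, |Θ' t| ≤ max D |y₀|) := by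
  have hF : LocallyLipschitz (secondOrderField G) :=
    (contDiff_secondOrderField hG).locallyLipschitz
  obtain ⟨γ, hγ₀, hγ⟩ := exists_forall_hasDerivAt_of_forall_ball hF fun _ hT =>
    exists_forall_mem_ball_hasDerivAt_secondOrderField hG hvanish t₀ x₀ y₀ hT
  have hθγ : EqOn (fun t => (θ t, θ' t)) γ I :=
    eqOn_of_hasDerivAt_of_locallyLipschitz hF hIopen hIconn.isPreconnected
      (fun t ht => (hθ t ht).prodMk (hθ' t ht)) (fun t _ => hγ t) ht₀ (by rw [hγ₀, hinit, hinit'])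
  refine ⟨fun t => (γ t).1, fun t => (γ t).2,
    fun t => (ContinuousLinearMap.fst ℝ ℝ ℝ).hasFDerivAt.comp_hasDerivAt t (hγ t),
    fun t => (ContinuousLinearMap.snd ℝ ℝ ℝ).hasFDerivAt.comp_hasDerivAt t (hγ t),
    fun t ht => Prod.ext_iff.mp (hθγ ht).symm, fun t => ?_⟩
  have := abs_snd_le_max (φ := id) hF hvanish isOpen_univ isPreconnected_univ (fun t _ => hγ t)
    (mem_univ t₀) (mem_univ t)
  rwa [hγ₀] at this

/-- Global existence for `θ″ = G(t, θ, θ′)` when `G` vanishes for large velocity: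
every (local, hence every maximal) solution extends to a solution defined on all
of `ℝ`, with the velocity bound `|θ′(t)| ≤ max D |y₀|`. -/
theorem global_existence_of_euler_lagrange_flow
    (D : ℝ) (hD : 0 < D)
    (G : ℝ × ℝ × ℝ → ℝ) (hG : ContDiff ℝ 1 G)
    (hvanish : ∀ t x y : ℝ, D ≤ |y| → G (t, x, y) = 0)
    (t₀ x₀ y₀ : ℝ)
    (I : Set ℝ) (hIopen : IsOpen I) (hIconn : I.OrdConnected) (ht₀ : t₀ ∈ I)
    (θ θ' : ℝ → ℝ)
    (hθ : ∀ t ∈ I, HasDerivAt θ (θ' t) t)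
    (hθ' : ∀ t ∈ I, HasDerivAt θ' (G (t, θ t, θ' t)) t)
    (hinit : θ t₀ = x₀) (hinit' : θ' t₀ = y₀) :
    ∃ Θ Θ' : ℝ → ℝ,
      (∀ t, HasDerivAt Θ (Θ' t) t) ∧
      (∀ t, HasDerivAt Θ' (G (t, Θ t, Θ' t)) t) ∧
      (∀ t ∈ I, Θ t = θ t ∧ Θ' t = θ' t) ∧
      (∀ t, |Θ' t| ≤ max D |y₀|) :=
  global_existence_of_euler_lagrange_flow_general D G hG hvanish t₀ x₀ y₀ I hIopen hIconn ht₀ θ θ'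
    hθ hθ' hinit hinit'
end
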